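/- arXiv:2504.17193 — 7 statements merged into one kernel-verified Lean document; each statement's English description precedes it below -/
import Mathlib

section
/- Let f : ℝ^d → ℝ be twice differentiable such that its Hessian (the derivative of the gradient map ∇f) is L-Lipschitz continuous with respect to the operator norm, for some L > 0. Then for any finitely many points x₁,…,xₙ ∈ ℝ^d and nonnegative weights λ₁,…,λₙ with ∑ᵢ λᵢ = 1, one has ‖∇f(∑ᵢ λᵢ xᵢ) − ∑ᵢ λᵢ ∇f(xᵢ)‖ ≤ (L/2) · ∑_{1 ≤ i < j ≤ n} λᵢ λⱼ ‖xᵢ − xⱼ‖². -/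
/-!
Write `c = ∑ λᵢ xᵢ` and `H = ∇²f(c)`. Since `∑ λᵢ (xᵢ - c) = 0`, the linear terms cancel and
`∑ λᵢ ∇f(xᵢ) - ∇f(c) = ∑ λᵢ (∇f(xᵢ) - ∇f(c) - H (xᵢ - c))`. The Lipschitz bound on the Hessian
makes each remainder at most `L/2 ‖xᵢ - c‖²` (along the segment its derivative in `t` is bounded
by `L t ‖xᵢ - c‖²`, which is the derivative of the parabola `L/2 t² ‖xᵢ - c‖²`), and the weighted variance
`∑ λᵢ ‖xᵢ - c‖²` equals `∑_{i<j} λᵢ λⱼ ‖xᵢ - xⱼ‖²`.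
-/

open RealInnerProductSpace Set Finset

section Taylor

variable {E F : Type*} [NormedAddCommGroup E] [NormedSpace ℝ E]
  [NormedAddCommGroup F] [NormedSpace ℝ F]

theorem norm_sub_sub_fderiv_apply_le_of_lipschitz_fderiv {g : E → F} {L : ℝ}
    (hg : Differentiable ℝ g)
    (hlip : ∀ x y, ‖fderiv ℝ g x - fderiv ℝ g y‖ ≤ L * ‖x - y‖) (x y : E) :
    ‖g y - g x - fderiv ℝ g x (y - x)‖ ≤ L / 2 * ‖y - x‖ ^ 2 := by
  set v := y - x
  set φ : ℝ → F := fun t => g (x + t • v) - g x - t • fderiv ℝ g x v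
  have hφ : ∀ t, HasDerivAt φ (fderiv ℝ g (x + t • v) v - fderiv ℝ g x v) t := by
    intro t
    have hline : HasDerivAt (fun t : ℝ => x + t • v) v t := by
      simpa using ((hasDerivAt_id t).smul_const v).const_add x
    exact ((((hg _).hasFDerivAt.comp_hasDerivAt t hline).sub_const (g x)).sub
      ((hasDerivAt_id t).smul_const (fderiv ℝ g x v))).congr_deriv (by rw [one_smul])
  have hB : ∀ t, HasDerivAt (fun t : ℝ => L / 2 * ‖v‖ ^ 2 * t ^ 2) (L * ‖v‖ ^ 2 * t) t := by
    intro t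
    exact ((hasDerivAt_pow 2 t).const_mul (L / 2 * ‖v‖ ^ 2)).congr_deriv (by norm_num; ring)
  have hbound : ∀ t ∈ Ico (0 : ℝ) 1,
      ‖fderiv ℝ g (x + t • v) v - fderiv ℝ g x v‖ ≤ L * ‖v‖ ^ 2 * t := by
    rintro t ⟨ht, -⟩
    calc ‖fderiv ℝ g (x + t • v) v - fderiv ℝ g x v‖
        = ‖(fderiv ℝ g (x + t • v) - fderiv ℝ g x) v‖ := rfl
      _ ≤ ‖fderiv ℝ g (x + t • v) - fderiv ℝ g x‖ * ‖v‖ := ContinuousLinearMap.le_opNorm _ _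
      _ ≤ L * ‖x + t • v - x‖ * ‖v‖ := by gcongr; exact hlip _ _
      _ = L * ‖v‖ ^ 2 * t := by
        rw [add_sub_cancel_left, norm_smul, Real.norm_of_nonneg ht]; ring
  have := image_norm_le_of_norm_deriv_right_le_deriv_boundary
    (fun t _ => (hφ t).continuousAt.continuousWithinAt) (fun t _ => (hφ t).hasDerivWithinAt)
    (by simp [φ]) hB hbound (right_mem_Icc.2 zero_le_one)
  simpa [φ, v] using this

end Taylor

section Centroid

variable {ι R M N : Type*} [Fintype ι] [CommRing R] [AddCommGroup M] [Module R M]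
  [AddCommGroup N] [Module R N]

theorem sum_smul_sub_centroid {lam : ι → R} (hsum : ∑ i, lam i = 1) (x : ι → M) :
    ∑ i, lam i • (x i - ∑ j, lam j • x j) = 0 := by
  simp only [smul_sub, sum_sub_distrib, ← sum_smul, hsum, one_smul, sub_self]

theorem sum_smul_sub_sub_map_eq_sum_smul_sub {F' : Type*} [FunLike F' M N]
    [LinearMapClass F' R M N] {lam : ι → R} (hsum : ∑ i, lam i = 1) (H : F') (g : M → N)
    (x : ι → M) :
    ∑ i, lam i • (g (x i) - g (∑ j, lam j • x j) - H (x i - ∑ j, lam j • x j)) =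
      ∑ i, lam i • g (x i) - g (∑ j, lam j • x j) := by
  have hlin : ∑ i, lam i • H (x i - ∑ j, lam j • x j) = 0 := by
    simp only [← map_smul]
    rw [← map_sum, sum_smul_sub_centroid hsum, map_zero]
  simp only [smul_sub, sum_sub_distrib, ← sum_smul, hsum, one_smul, hlin, sub_zero]

end Centroid

section Variance

variable {ι E : Type*} [Fintype ι] [NormedAddCommGroup E] [InnerProductSpace ℝ E]

theorem sum_sum_mul_norm_sub_sq_of_sum_smul_eq_zero {lam : ι → ℝ} {y : ι → E}
    (hsum : ∑ i, lam i = 1) (hy : ∑ i, lam i • y i = 0) :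
    ∑ i, ∑ j, lam i * lam j * ‖y i - y j‖ ^ 2 = 2 * ∑ i, lam i * ‖y i‖ ^ 2 := by
  have hcross : ∀ i, ∑ j, lam j * ⟪y i, y j⟫ = 0 := fun i => by
    simp only [← real_inner_smul_right, ← inner_sum, hy, inner_zero_right]
  calc ∑ i, ∑ j, lam i * lam j * ‖y i - y j‖ ^ 2
      = ∑ i, ∑ j, (lam i * ‖y i‖ ^ 2 * lam j + lam j * ‖y j‖ ^ 2 * lam i
          - 2 * lam i * (lam j * ⟪y i, y j⟫)) := by
        refine sum_congr rfl fun i _ => sum_congr rfl fun j _ => ?_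
        rw [norm_sub_sq_real]; ring
    _ = 2 * ∑ i, lam i * ‖y i‖ ^ 2 := by
        simp only [sum_add_distrib, sum_sub_distrib, ← mul_sum, ← sum_mul, hsum, hcross]
        ring

theorem two_nsmul_sum_sum_ite_lt {M : Type*} [AddCommMonoid M] [LinearOrder ι]
    {T : ι → ι → M} (hT : ∀ i j, T i j = T j i) (hdiag : ∀ i, T i i = 0) :
    2 • ∑ i, ∑ j, (if i < j then T i j else 0) = ∑ i, ∑ j, T i j := by
  have hsplit : ∀ i j, T i j = (if i < j then T i j else 0) + (if j < i then T i j else 0) := by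
    intro i j
    rcases lt_trichotomy i j with h | rfl | h
    · simp [h, h.not_gt]
    · simp [hdiag]
    · simp [h, h.not_gt]
  have hswap :
      ∑ i, ∑ j, (if j < i then T i j else 0) = ∑ i, ∑ j, (if i < j then T i j else 0) := by
    rw [sum_comm]
    simp only [hT]
  rw [two_nsmul]
  nth_rw 2 [← hswap]
  simp only [← sum_add_distrib, ← hsplit]

theorem sum_mul_norm_sub_centroid_sq [LinearOrder ι] {lam : ι → ℝ} (hsum : ∑ i, lam i = 1)
    (x : ι → E) :
    ∑ i, lam i * ‖x i - ∑ j, lam j • x j‖ ^ 2 =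
      ∑ i, ∑ j, if i < j then lam i * lam j * ‖x i - x j‖ ^ 2 else 0 := by
  have h := sum_sum_mul_norm_sub_sq_of_sum_smul_eq_zero hsum (sum_smul_sub_centroid hsum x)
  simp only [sub_sub_sub_cancel_right] at h
  have h2 := two_nsmul_sum_sum_ite_lt (T := fun i j => lam i * lam j * ‖x i - x j‖ ^ 2)
    (fun i j => by rw [norm_sub_rev]; ring) (fun i => by simp)
  rw [nsmul_eq_mul] at h2
  push_cast at h2
  linarith

end Variance

theorem hessian_free_inequality_general (d : ℕ) (f : EuclideanSpace ℝ (Fin d) → ℝ) (L : ℝ)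
    (hf' : Differentiable ℝ (gradient f))
    (hlip : ∀ x y : EuclideanSpace ℝ (Fin d),
      ‖fderiv ℝ (gradient f) x - fderiv ℝ (gradient f) y‖ ≤ L * ‖x - y‖)
    (n : ℕ) (x : Fin n → EuclideanSpace ℝ (Fin d)) (lam : Fin n → ℝ)
    (hlam : ∀ i, 0 ≤ lam i) (hsum : ∑ i, lam i = 1) :
    ‖gradient f (∑ i, lam i • x i) - ∑ i, lam i • gradient f (x i)‖ ≤
      L / 2 * ∑ i, ∑ j, if i < j then lam i * lam j * ‖x i - x j‖ ^ 2 else 0 := by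
  rw [← sum_mul_norm_sub_centroid_sq hsum, mul_sum, ← norm_neg, neg_sub,
    ← sum_smul_sub_sub_map_eq_sum_smul_sub hsum (fderiv ℝ (gradient f) (∑ j, lam j • x j))]
  refine (norm_sum_le _ _).trans (sum_le_sum fun i _ => ?_)
  rw [norm_smul, Real.norm_of_nonneg (hlam i), mul_left_comm]
  exact mul_le_mul_of_nonneg_left
    (norm_sub_sub_fderiv_apply_le_of_lipschitz_fderiv hf' hlip _ _) (hlam i)

/-- **Hessian-free inequality.** If `f : ℝ^d → ℝ` is twice differentiable with
`L`-Lipschitz Hessian (the Fréchet derivative of the gradient map, in operator norm),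
then the gradients satisfy the Jensen-type inequality. -/
theorem hessian_free_inequality (d : ℕ) (f : EuclideanSpace ℝ (Fin d) → ℝ) (L : ℝ) (hL : 0 < L)
    (hf : Differentiable ℝ f)
    (hf' : Differentiable ℝ (gradient f))
    (hlip : ∀ x y : EuclideanSpace ℝ (Fin d),
      ‖fderiv ℝ (gradient f) x - fderiv ℝ (gradient f) y‖ ≤ L * ‖x - y‖)
    (n : ℕ) (x : Fin n → EuclideanSpace ℝ (Fin d)) (lam : Fin n → ℝ)
    (hlam : ∀ i, 0 ≤ lam i) (hsum : ∑ i, lam i = 1) :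
    ‖gradient f (∑ i, lam i • x i) - ∑ i, lam i • gradient f (x i)‖ ≤
      L / 2 * ∑ i, ∑ j, if i < j then lam i * lam j * ‖x i - x j‖ ^ 2 else 0 :=
  hessian_free_inequality_general d f L hf' hlip n x lam hlam hsum
end

section
/- Let X be a real Hilbert space and Y a real Banach space that is reflexive (the canonical embedding of Y into its double dual Y** is surjective). Let F : X → Y be continuous and let L > 0. Then the following are equivalent: (i) F is Fréchet differentiable on X and its derivative F′ : X → B(X,Y) is L-Lipschitz continuous in the operator norm; (ii) for any finitely many points x₁,…,xₙ ∈ X and nonnegative weights λ₁,…,λₙ with ∑ᵢ λᵢ = 1, one has ‖F(∑ᵢ λᵢ xᵢ) − ∑ᵢ λᵢ F(xᵢ)‖ ≤ (L/2) · ∑_{1 ≤ i < j ≤ n} λᵢ λⱼ ‖xᵢ − xⱼ‖². -/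
/-!
Forward direction: at the barycentre `z = ∑ λᵢ xᵢ`, Taylor's formula with an `L`-Lipschitz
derivative bounds each `F xᵢ - F z - F' z (xᵢ - z)` by `L/2 ‖xᵢ - z‖²`; the linear terms cancel
in the weighted sum, and `∑ λᵢ ‖xᵢ - z‖² = ∑_{i<j} λᵢ λⱼ ‖xᵢ - xⱼ‖²`.

Converse: the two-point case says that `F` deviates from its chords by at most
`L/2 · t(1-t)‖x - y‖²`. Hence the difference quotients `t⁻¹ (F (x + t h) - F x)` converge at
rate `O(t)` as `t → 0⁺`; the limit `A x h` is additive (by the midpoint inequality) and continuous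
(by continuity of `F`), and `‖F (x + h) - F x - A x h‖ ≤ L/2 ‖h‖²`. Comparing these Taylor bounds
from `x` and from `y` at the two points `(x + y ± e)/2` and using the parallelogram law gives
`‖(A x - A y) e‖ ≤ L/2 (‖x - y‖² + ‖e‖²)`, which for `‖e‖ = ‖x - y‖` is the Lipschitz bound.
-/

open Filter Topology Finset Set
open scoped RealInnerProductSpace

theorem sum_sum_ite_lt_eq_half {ι : Type*} [Fintype ι] [LinearOrder ι] (a : ι → ι → ℝ)
    (hsymm : ∀ i j, a i j = a j i) (hdiag : ∀ i, a i i = 0) :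
    ∑ i, ∑ j, (if i < j then a i j else 0) = (∑ i, ∑ j, a i j) / 2 := by
  have hsplit : ∀ i j, a i j = (if i < j then a i j else 0) + (if j < i then a j i else 0) := by
    intro i j
    rcases lt_trichotomy i j with h | rfl | h
    · simp [h, h.not_gt]
    · simp [hdiag]
    · simp [h, h.not_gt, hsymm i j]
  have hdouble : ∑ i, ∑ j, a i j = 2 * ∑ i, ∑ j, (if i < j then a i j else 0) := by
    conv_lhs => enter [2, i, 2, j]; rw [hsplit i j]
    rw [two_mul, ← sum_add_distrib]
    simp only [sum_add_distrib]
    rw [sum_comm (f := fun i j => if j < i then a j i else 0)]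
  linarith

section Variance

variable {X : Type*} [NormedAddCommGroup X] [InnerProductSpace ℝ X]

theorem sum_mul_norm_sub_sq_eq {ι : Type*} [Fintype ι] (x : ι → X) (w : ι → ℝ)
    (hw : ∑ i, w i = 1) (y : X) :
    ∑ i, w i * ‖y - x i‖ ^ 2 =
      ∑ i, w i * ‖x i - ∑ j, w j • x j‖ ^ 2 + ‖y - ∑ j, w j • x j‖ ^ 2 := by
  set z := ∑ j, w j • x j
  have hcentered : ∑ i, w i • (x i - z) = 0 := by
    simp [smul_sub, sum_sub_distrib, ← sum_smul, hw, z]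
  have hcross : ∑ i, w i * ⟪x i - z, y - z⟫ = 0 := by
    simp_rw [← real_inner_smul_left, ← sum_inner, hcentered, inner_zero_left]
  calc ∑ i, w i * ‖y - x i‖ ^ 2
      = ∑ i, w i * (‖x i - z‖ ^ 2 - 2 * ⟪x i - z, y - z⟫ + ‖y - z‖ ^ 2) := by
        refine sum_congr rfl fun i _ => ?_
        rw [← norm_sub_sq_real, norm_sub_rev]
        congr 3
        abel
    _ = _ := by
        simp only [mul_add, mul_sub, sum_add_distrib, sum_sub_distrib, ← sum_mul, hw, one_mul]
        simp_rw [mul_left_comm (w _) 2, ← mul_sum, hcross]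
        ring

theorem sum_sum_mul_norm_sub_sq_eq {ι : Type*} [Fintype ι] (x : ι → X) (w : ι → ℝ)
    (hw : ∑ i, w i = 1) :
    ∑ i, ∑ j, w i * w j * ‖x i - x j‖ ^ 2 = 2 * ∑ i, w i * ‖x i - ∑ j, w j • x j‖ ^ 2 := by
  simp_rw [mul_assoc, ← mul_sum, sum_mul_norm_sub_sq_eq x w hw, mul_add, sum_add_distrib,
    ← sum_mul, hw, one_mul]
  ring

theorem sum_sum_ite_lt_mul_norm_sub_sq_eq {ι : Type*} [Fintype ι] [LinearOrder ι] (x : ι → X)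
    (w : ι → ℝ) (hw : ∑ i, w i = 1) :
    ∑ i, ∑ j, (if i < j then w i * w j * ‖x i - x j‖ ^ 2 else 0) =
      ∑ i, w i * ‖x i - ∑ j, w j • x j‖ ^ 2 := by
  rw [sum_sum_ite_lt_eq_half _ (fun i j => by rw [norm_sub_rev]; ring) (fun i => by simp),
    sum_sum_mul_norm_sub_sq_eq x w hw]
  ring

end Variance

section Limits

variable {E : Type*} [NormedAddCommGroup E]

theorem tendsto_nhdsGT_of_norm_sub_le_mul {G : ℝ → E} {v : E} {C : ℝ}
    (hG : ∀ t, 0 < t → ‖G t - v‖ ≤ C * t) : Tendsto G (𝓝[>] 0) (𝓝 v) := by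
  rw [tendsto_iff_norm_sub_tendsto_zero]
  refine squeeze_zero' (Eventually.of_forall fun _ => norm_nonneg _)
    (eventually_nhdsWithin_of_forall hG) ?_
  simpa using ((continuous_const_mul C).tendsto 0).mono_left nhdsWithin_le_nhds

theorem exists_forall_norm_sub_le_mul [CompleteSpace E] {G : ℝ → E} {C : ℝ}
    (hG : ∀ s t, 0 < s → s ≤ t → ‖G s - G t‖ ≤ C * (t - s)) :
    ∃ v, ∀ t, 0 < t → ‖G t - v‖ ≤ C * t := by
  have hC : 0 ≤ C := by nlinarith [hG 1 2 one_pos one_le_two, norm_nonneg (G 1 - G 2)]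
  have hdist : ∀ s t, 0 < s → 0 < t → dist (G s) (G t) ≤ C * |t - s| := by
    intro s t hs ht
    rcases le_total s t with hst | hts
    · rw [dist_eq_norm, abs_of_nonneg (sub_nonneg.2 hst)]
      exact hG s t hs hst
    · rw [dist_comm, dist_eq_norm, abs_sub_comm, abs_of_nonneg (sub_nonneg.2 hts)]
      exact hG t s ht hts
  have hcauchy : Cauchy (map G (𝓝[>] 0)) := by
    refine Metric.cauchy_iff.2 ⟨inferInstance, fun ε hε => ⟨G '' Ioo 0 (ε / (C + 1)),
      image_mem_map (Ioo_mem_nhdsGT (by positivity)), ?_⟩⟩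
    rintro _ ⟨s, hs, rfl⟩ _ ⟨t, ht, rfl⟩
    have hst : |t - s| < ε / (C + 1) := by
      rw [abs_lt]; constructor <;> linarith [hs.1, hs.2, ht.1, ht.2]
    calc dist (G s) (G t) ≤ C * |t - s| := hdist s t hs.1 ht.1
      _ ≤ C * (ε / (C + 1)) := by gcongr
      _ < ε := by rw [mul_div_assoc', div_lt_iff₀ (by positivity)]; nlinarith
  obtain ⟨v, hv⟩ := cauchy_map_iff_exists_tendsto.1 hcauchy
  refine ⟨v, fun t ht => le_of_tendsto ((tendsto_const_nhds.sub hv).norm) ?_⟩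
  filter_upwards [Ioo_mem_nhdsGT ht] with s hs
  calc ‖G t - G s‖ = ‖G s - G t‖ := norm_sub_rev _ _
    _ ≤ C * (t - s) := hG s t hs.1 hs.2.le
    _ ≤ C * t := by nlinarith [hs.1]

end Limits

theorem AddMonoidHom.continuous_of_norm_image_sub_sub_le {X Y : Type*} [NormedAddCommGroup X]
    [NormedAddCommGroup Y] {F : X → Y} (D : X →+ Y) {x : X} {C : ℝ} (hF : ContinuousAt F x)
    (hD : ∀ h, ‖F (x + h) - F x - D h‖ ≤ C * ‖h‖ ^ 2) : Continuous D := by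
  have hbound : ∀ h, ‖D h‖ ≤ ‖F (x + h) - F x‖ + C * ‖h‖ ^ 2 := fun h => by
    have := norm_sub_le (F (x + h) - F x) (F (x + h) - F x - D h)
    rw [sub_sub_cancel] at this
    linarith [hD h]
  have hFx : Tendsto (fun h => F (x + h)) (𝓝 0) (𝓝 (F x)) := by
    refine hF.tendsto.comp ?_
    simpa using (tendsto_id (x := 𝓝 (0 : X))).const_add x
  have hlim : Tendsto (fun h => ‖F (x + h) - F x‖ + C * ‖h‖ ^ 2) (𝓝 0) (𝓝 0) := by
    simpa using (hFx.sub_const (F x)).norm.add ((tendsto_norm_zero.pow 2).const_mul C)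
  exact continuous_of_tendsto_nhds_zero D (squeeze_zero_norm hbound hlim)

section NormedSpace

variable {X : Type*} [NormedAddCommGroup X] [NormedSpace ℝ X]
  {Y : Type*} [NormedAddCommGroup Y] [NormedSpace ℝ Y] {F : X → Y}

theorem norm_image_sub_sub_apply_le_of_lipschitz {F' : X → X →L[ℝ] Y} {L : ℝ}
    (hF : ∀ x, HasFDerivAt F (F' x) x) (hF' : ∀ x y, ‖F' x - F' y‖ ≤ L * ‖x - y‖) (x y : X) :
    ‖F y - F x - F' x (y - x)‖ ≤ L / 2 * ‖y - x‖ ^ 2 := by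
  set v := y - x
  -- compare `g t = F (x + t v) - F x - t F' x v` with `L/2 ‖v‖² t²` on `[0, 1]`
  set g : ℝ → Y := fun t => F (x + t • v) - F x - t • F' x v
  have hg : ∀ t : ℝ, HasDerivAt g ((F' (x + t • v) - F' x) v) t := by
    intro t
    have hline : HasDerivAt (fun t : ℝ => x + t • v) v t := by
      simpa using ((hasDerivAt_id t).smul_const v).const_add x
    exact ((((hF _).comp_hasDerivAt t hline).sub_const (F x)).sub
      ((hasDerivAt_id t).smul_const (F' x v))).congr_deriv (by simp)
  have hB : ∀ t : ℝ, HasDerivAt (fun t => L / 2 * ‖v‖ ^ 2 * t ^ 2) (L * ‖v‖ ^ 2 * t) t := by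
    intro t
    exact ((hasDerivAt_pow 2 t).const_mul _).congr_deriv (by norm_num; ring)
  have hbound : ∀ t ∈ Ico (0 : ℝ) 1, ‖(F' (x + t • v) - F' x) v‖ ≤ L * ‖v‖ ^ 2 * t := by
    intro t ht
    calc ‖(F' (x + t • v) - F' x) v‖ ≤ ‖F' (x + t • v) - F' x‖ * ‖v‖ :=
          ContinuousLinearMap.le_opNorm _ _
      _ ≤ L * ‖t • v‖ * ‖v‖ := by
          gcongr
          simpa using hF' (x + t • v) x
      _ = L * ‖v‖ ^ 2 * t := by rw [norm_smul, Real.norm_of_nonneg ht.1]; ring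
  have h := image_norm_le_of_norm_deriv_right_le_deriv_boundary
    (fun t _ => (hg t).continuousAt.continuousWithinAt) (fun t _ => (hg t).hasDerivWithinAt)
    (by simp [g]) hB hbound (right_mem_Icc.2 zero_le_one)
  simpa [g, v] using h

theorem norm_image_sum_smul_sub_sum_smul_le {F' : X → X →L[ℝ] Y} {L : ℝ}
    (hF : ∀ x, HasFDerivAt F (F' x) x) (hF' : ∀ x y, ‖F' x - F' y‖ ≤ L * ‖x - y‖)
    {ι : Type*} [Fintype ι] (x : ι → X) (w : ι → ℝ) (hw₀ : ∀ i, 0 ≤ w i)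
    (hw₁ : ∑ i, w i = 1) :
    ‖F (∑ i, w i • x i) - ∑ i, w i • F (x i)‖ ≤
      L / 2 * ∑ i, w i * ‖x i - ∑ j, w j • x j‖ ^ 2 := by
  set z := ∑ j, w j • x j
  have hcancel : F z - ∑ i, w i • F (x i) = -∑ i, w i • (F (x i) - F z - F' z (x i - z)) := by
    have hcentered : ∑ i, w i • (x i - z) = 0 := by
      simp [smul_sub, sum_sub_distrib, ← sum_smul, hw₁, z]
    have hlin : ∑ i, w i • F' z (x i - z) = 0 := by
      simp_rw [← map_smul, ← map_sum, hcentered, map_zero]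
    simp only [smul_sub, sum_sub_distrib, hlin, ← sum_smul, hw₁, one_smul]
    abel
  rw [hcancel, norm_neg, mul_sum]
  refine (norm_sum_le _ _).trans (sum_le_sum fun i _ => ?_)
  rw [norm_smul, Real.norm_of_nonneg (hw₀ i), mul_left_comm]
  exact mul_le_mul_of_nonneg_left (norm_image_sub_sub_apply_le_of_lipschitz hF hF' z (x i)) (hw₀ i)

theorem hasFDerivAt_of_norm_image_sub_sub_le {A : X →L[ℝ] Y} {x : X} {C : ℝ}
    (hA : ∀ h, ‖F (x + h) - F x - A h‖ ≤ C * ‖h‖ ^ 2) : HasFDerivAt F A x := by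
  rw [hasFDerivAt_iff_isLittleO_nhds_zero]
  refine (Asymptotics.IsBigO.of_bound C (Eventually.of_forall fun h => ?_)).trans_isLittleO
    (Asymptotics.isLittleO_norm_pow_id one_lt_two)
  simpa using hA h

theorem norm_image_segment_sub_le_of_jensen {L : ℝ}
    (hJ : ∀ (n : ℕ) (x : Fin n → X) (w : Fin n → ℝ), (∀ i, 0 ≤ w i) → ∑ i, w i = 1 →
      ‖F (∑ i, w i • x i) - ∑ i, w i • F (x i)‖ ≤
        L / 2 * ∑ i, ∑ j, if i < j then w i * w j * ‖x i - x j‖ ^ 2 else 0)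
    (x y : X) {t : ℝ} (ht : t ∈ Icc (0 : ℝ) 1) :
    ‖F ((1 - t) • x + t • y) - ((1 - t) • F x + t • F y)‖ ≤
      L / 2 * (t * (1 - t) * ‖x - y‖ ^ 2) := by
  have h := hJ 2 ![x, y] ![1 - t, t] (by simp [Fin.forall_fin_two, ht.1, ht.2]) (by simp)
  simp [Fin.sum_univ_two] at h
  convert h using 3
  ring

theorem norm_slope_sub_slope_le {L : ℝ}
    (hseg : ∀ x y : X, ∀ t ∈ Icc (0 : ℝ) 1,
      ‖F ((1 - t) • x + t • y) - ((1 - t) • F x + t • F y)‖ ≤ L / 2 * (t * (1 - t) * ‖x - y‖ ^ 2))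
    (x h : X) (s t : ℝ) (hs : 0 < s) (hst : s ≤ t) :
    ‖s⁻¹ • (F (x + s • h) - F x) - t⁻¹ • (F (x + t • h) - F x)‖ ≤ L / 2 * ‖h‖ ^ 2 * (t - s) := by
  have ht : 0 < t := hs.trans_le hst
  have hseg' := hseg x (x + t • h) (s / t) ⟨by positivity, div_le_one_of_le₀ hst ht.le⟩
  rw [show (1 - s / t) • x + (s / t) • (x + t • h) = x + s • h by
    rw [smul_add, smul_smul, div_mul_cancel₀ s ht.ne']; module] at hseg'
  have hval : s⁻¹ • (F (x + s • h) - F x) - t⁻¹ • (F (x + t • h) - F x) =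
      s⁻¹ • (F (x + s • h) - ((1 - s / t) • F x + (s / t) • F (x + t • h))) := by
    match_scalars <;> field_simp
    ring
  calc ‖s⁻¹ • (F (x + s • h) - F x) - t⁻¹ • (F (x + t • h) - F x)‖
      = s⁻¹ * ‖F (x + s • h) - ((1 - s / t) • F x + (s / t) • F (x + t • h))‖ := by
        rw [hval, norm_smul, Real.norm_of_nonneg (inv_nonneg.2 hs.le)]
    _ ≤ s⁻¹ * (L / 2 * (s / t * (1 - s / t) * ‖x - (x + t • h)‖ ^ 2)) := by gcongr
    _ = L / 2 * ‖h‖ ^ 2 * (t - s) := by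
        rw [sub_add_cancel_left, norm_neg, norm_smul, Real.norm_of_nonneg ht.le]
        field_simp

theorem map_add_of_norm_slope_sub_le {L : ℝ}
    (hseg : ∀ x y : X, ∀ t ∈ Icc (0 : ℝ) 1,
      ‖F ((1 - t) • x + t • y) - ((1 - t) • F x + t • F y)‖ ≤ L / 2 * (t * (1 - t) * ‖x - y‖ ^ 2))
    (x : X) {D : X → Y}
    (hD : ∀ h, ∀ t, 0 < t → ‖t⁻¹ • (F (x + t • h) - F x) - D h‖ ≤ L / 2 * ‖h‖ ^ 2 * t)
    (h k : X) : D (h + k) = D h + D k := by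
  refine tendsto_nhds_unique (tendsto_nhdsGT_of_norm_sub_le_mul (hD (h + k)))
    (tendsto_nhdsGT_of_norm_sub_le_mul (C := L / 2 * ‖h - k‖ ^ 2 + L * ‖h‖ ^ 2 + L * ‖k‖ ^ 2)
      fun t ht => ?_)
  -- `x + t • (h + k)` is the midpoint of `x + (2 * t) • h` and `x + (2 * t) • k`
  have hmid := hseg (x + (2 * t) • h) (x + (2 * t) • k) 2⁻¹ ⟨by norm_num, by norm_num⟩
  rw [show (1 - 2⁻¹ : ℝ) • (x + (2 * t) • h) + (2⁻¹ : ℝ) • (x + (2 * t) • k) = x + t • (h + k) by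
    module] at hmid
  have hsplit : t⁻¹ • (F (x + t • (h + k)) - F x) - (D h + D k) =
      t⁻¹ • (F (x + t • (h + k)) -
        ((1 - 2⁻¹ : ℝ) • F (x + (2 * t) • h) + (2⁻¹ : ℝ) • F (x + (2 * t) • k))) +
      ((2 * t)⁻¹ • (F (x + (2 * t) • h) - F x) - D h) +
      ((2 * t)⁻¹ • (F (x + (2 * t) • k) - F x) - D k) := by
    match_scalars <;> field_simp <;> ring
  have hchord : ‖t⁻¹ • (F (x + t • (h + k)) -
      ((1 - 2⁻¹ : ℝ) • F (x + (2 * t) • h) + (2⁻¹ : ℝ) • F (x + (2 * t) • k)))‖ ≤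
        L / 2 * ‖h - k‖ ^ 2 * t := by
    rw [norm_smul, Real.norm_of_nonneg (inv_nonneg.2 ht.le)]
    calc _ ≤ t⁻¹ * (L / 2 * (2⁻¹ * (1 - 2⁻¹) * ‖x + (2 * t) • h - (x + (2 * t) • k)‖ ^ 2)) := by
          gcongr
      _ = L / 2 * ‖h - k‖ ^ 2 * t := by
          rw [add_sub_add_left_eq_sub, ← smul_sub, norm_smul, Real.norm_of_nonneg (by positivity)]
          field_simp
          ring
  rw [hsplit]
  refine norm_add₃_le.trans ?_
  linarith [hD h (2 * t) (by positivity), hD k (2 * t) (by positivity)]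

theorem exists_forall_norm_image_add_sub_sub_le [CompleteSpace Y] (hF : Continuous F) {L : ℝ}
    (hseg : ∀ x y : X, ∀ t ∈ Icc (0 : ℝ) 1,
      ‖F ((1 - t) • x + t • y) - ((1 - t) • F x + t • F y)‖ ≤ L / 2 * (t * (1 - t) * ‖x - y‖ ^ 2)) :
    ∃ A : X → X →L[ℝ] Y, ∀ x h, ‖F (x + h) - F x - A x h‖ ≤ L / 2 * ‖h‖ ^ 2 := by
  choose D hD using fun x h => exists_forall_norm_sub_le_mul (norm_slope_sub_slope_le hseg x h)
  have hD₁ : ∀ x h, ‖F (x + h) - F x - D x h‖ ≤ L / 2 * ‖h‖ ^ 2 := fun x h => by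
    simpa using hD x h 1 one_pos
  let D' : X → X →+ Y := fun x =>
    AddMonoidHom.mk' (D x) (map_add_of_norm_slope_sub_le hseg x (hD x))
  exact ⟨fun x => (D' x).toRealLinearMap
    ((D' x).continuous_of_norm_image_sub_sub_le hF.continuousAt (hD₁ x)), hD₁⟩

theorem norm_sub_apply_sub_le_of_norm_sub_sub_le {A : X → X →L[ℝ] Y} {K : ℝ}
    (hA : ∀ x y, ‖F y - F x - A x (y - x)‖ ≤ K / 2 * ‖y - x‖ ^ 2) (x y p q : X) :
    ‖(A x - A y) (q - p)‖ ≤ K / 2 * (‖p - x‖ ^ 2 + ‖p - y‖ ^ 2 + ‖q - x‖ ^ 2 + ‖q - y‖ ^ 2) := by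
  set r : X → X → Y := fun a b => F b - F a - A a (b - a)
  have hr : ∀ a b, ‖r a b‖ ≤ K / 2 * ‖b - a‖ ^ 2 := hA
  have hsplit : (A x - A y) (q - p) = r x p - r y p - r x q + r y q := by
    simp only [r, sub_apply, map_sub]
    abel
  rw [hsplit]
  linarith [norm_add_le (r x p - r y p - r x q) (r y q), norm_sub_le (r x p - r y p) (r x q),
    norm_sub_le (r x p) (r y p), hr x p, hr y p, hr x q, hr y q]

end NormedSpace

section InnerProductSpace

variable {X : Type*} [NormedAddCommGroup X] [InnerProductSpace ℝ X]
  {Y : Type*} [NormedAddCommGroup Y] [NormedSpace ℝ Y] {F : X → Y}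

theorem norm_sub_le_of_norm_sub_sub_le {A : X → X →L[ℝ] Y} {K : ℝ} (hK : 0 < K)
    (hA : ∀ x y, ‖F y - F x - A x (y - x)‖ ≤ K / 2 * ‖y - x‖ ^ 2) (x y : X) :
    ‖A x - A y‖ ≤ K * ‖x - y‖ := by
  rcases eq_or_ne x y with rfl | hxy
  · simp
  have hd : 0 < ‖x - y‖ := norm_pos_iff.2 (sub_ne_zero.2 hxy)
  have hmid : ∀ e, ‖(A x - A y) e‖ ≤ K / 2 * (‖x - y‖ ^ 2 + ‖e‖ ^ 2) := by
    intro e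
    have h := norm_sub_apply_sub_le_of_norm_sub_sub_le hA x y
      ((2⁻¹ : ℝ) • (x + y - e)) ((2⁻¹ : ℝ) • (x + y + e))
    have hpar := parallelogram_law_with_norm ℝ (x - y) e
    rw [show (2⁻¹ : ℝ) • (x + y + e) - (2⁻¹ : ℝ) • (x + y - e) = e by module,
      show (2⁻¹ : ℝ) • (x + y - e) - x = -(2⁻¹ : ℝ) • (x - y + e) by module,
      show (2⁻¹ : ℝ) • (x + y - e) - y = (2⁻¹ : ℝ) • (x - y - e) by module,
      show (2⁻¹ : ℝ) • (x + y + e) - x = -(2⁻¹ : ℝ) • (x - y - e) by module,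
      show (2⁻¹ : ℝ) • (x + y + e) - y = (2⁻¹ : ℝ) • (x - y + e) by module] at h
    simp only [norm_smul, norm_neg, Real.norm_eq_abs, abs_inv, abs_two] at h
    nlinarith
  refine ContinuousLinearMap.opNorm_le_of_unit_norm (by positivity) fun e he => ?_
  have h := hmid (‖x - y‖ • e)
  rw [map_smul, norm_smul, norm_smul, norm_norm, he] at h
  nlinarith

end InnerProductSpace

theorem frechet_lipschitz_iff_jensen_inequality_general
    {X : Type*} [NormedAddCommGroup X] [InnerProductSpace ℝ X]
    {Y : Type*} [NormedAddCommGroup Y] [NormedSpace ℝ Y] [CompleteSpace Y]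
    (F : X → Y) (hF : Continuous F) (L : ℝ) (hL : 0 < L) :
    (Differentiable ℝ F ∧ ∀ x y : X, ‖fderiv ℝ F x - fderiv ℝ F y‖ ≤ L * ‖x - y‖) ↔
      (∀ (n : ℕ) (x : Fin n → X) (lam : Fin n → ℝ), (∀ i, 0 ≤ lam i) → ∑ i, lam i = 1 →
        ‖F (∑ i, lam i • x i) - ∑ i, lam i • F (x i)‖ ≤
          L / 2 * ∑ i, ∑ j, if i < j then lam i * lam j * ‖x i - x j‖ ^ 2 else 0) := by
  constructor
  · rintro ⟨hdiff, hlip⟩ n x lam hlam₀ hlam₁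
    rw [sum_sum_ite_lt_mul_norm_sub_sq_eq x lam hlam₁]
    exact norm_image_sum_smul_sub_sum_smul_le (fun x => (hdiff x).hasFDerivAt) hlip x lam
      hlam₀ hlam₁
  · intro hJ
    obtain ⟨A, hA⟩ := exists_forall_norm_image_add_sub_sub_le hF
      fun x y t ht => norm_image_segment_sub_le_of_jensen hJ x y ht
    have hderiv : ∀ x, HasFDerivAt F (A x) x := fun x =>
      hasFDerivAt_of_norm_image_sub_sub_le (hA x)
    refine ⟨fun x => (hderiv x).differentiableAt, fun x y => ?_⟩
    rw [(hderiv x).fderiv, (hderiv y).fderiv]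
    exact norm_sub_le_of_norm_sub_sub_le hL (fun x y => by simpa using hA x (y - x)) x y

/-- **Main theorem (Hessian-free characterization).** Let `X` be a real Hilbert space and
`Y` a reflexive real Banach space, `F : X → Y` continuous, `L > 0`. Then `F` is Fréchet
differentiable with `L`-Lipschitz derivative if and only if `F` satisfies the Jensen-type
inequality for all convex combinations. -/
theorem frechet_lipschitz_iff_jensen_inequality
    {X : Type*} [NormedAddCommGroup X] [InnerProductSpace ℝ X] [CompleteSpace X]
    {Y : Type*} [NormedAddCommGroup Y] [NormedSpace ℝ Y] [CompleteSpace Y]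
    (hrefl : Function.Surjective (NormedSpace.inclusionInDoubleDual ℝ Y))
    (F : X → Y) (hF : Continuous F) (L : ℝ) (hL : 0 < L) :
    (Differentiable ℝ F ∧ ∀ x y : X, ‖fderiv ℝ F x - fderiv ℝ F y‖ ≤ L * ‖x - y‖) ↔
      (∀ (n : ℕ) (x : Fin n → X) (lam : Fin n → ℝ), (∀ i, 0 ≤ lam i) → ∑ i, lam i = 1 →
        ‖F (∑ i, lam i • x i) - ∑ i, lam i • F (x i)‖ ≤
          L / 2 * ∑ i, ∑ j, if i < j then lam i * lam j * ‖x i - x j‖ ^ 2 else 0) :=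
  frechet_lipschitz_iff_jensen_inequality_general F hF L hL
end

section
/- Let X be a real Hilbert space and Y a real Banach space that is reflexive (the canonical embedding of Y into its double dual Y** is surjective). Let F : X → Y be continuous and L > 0, and suppose that for any finitely many points x₁,…,xₙ ∈ X and nonnegative weights λ₁,…,λₙ with ∑ᵢ λᵢ = 1, one has ‖F(∑ᵢ λᵢ xᵢ) − ∑ᵢ λᵢ F(xᵢ)‖ ≤ (L/2) · ∑_{1 ≤ i < j ≤ n} λᵢ λⱼ ‖xᵢ − xⱼ‖². Then F is Fréchet differentiable on X and its derivative F′ : X → B(X,Y) is L-Lipschitz continuous in the operator norm. -/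
/-!
Restricted to a line `t ↦ F (x + t • v)`, the two-point Jensen inequality makes the slopes
`(F (x + t • v) - F x) / t` Lipschitz in `t ≠ 0`, hence convergent as `t → 0`; the limit, the
directional derivative `∂ᵥF x`, satisfies `‖F (x + v) - F x - ∂ᵥF x‖ ≤ L / 2 * ‖v‖ ^ 2`. The
midpoint inequality makes `v ↦ ∂ᵥF x` additive, and continuity of `F` makes it bounded, so it is
the Fréchet derivative.

For the Lipschitz bound, fix `φ ∈ Y*` and let `∇g` be the gradient of `g = φ ∘ F`. With
`K = ‖φ‖ * L` the remainder bound says that `g + K / 2 * ‖·‖ ^ 2` is convex and `2K`-smooth, and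
cocoercivity of the gradient of such a function gives `‖∇g x - ∇g y‖ ≤ K * ‖x - y‖`. Testing
against all `φ` bounds the operator norm of `fderiv ℝ F x - fderiv ℝ F y`.
-/

open Filter Topology

theorem hasFDerivAt_of_norm_sub_sub_le {𝕜 E Y : Type*} [NontriviallyNormedField 𝕜]
    [NormedAddCommGroup E] [NormedSpace 𝕜 E] [NormedAddCommGroup Y] [NormedSpace 𝕜 Y]
    {f : E → Y} {f' : E →L[𝕜] Y} {x : E} {C : ℝ}
    (h : ∀ v, ‖f (x + v) - f x - f' v‖ ≤ C * ‖v‖ ^ 2) : HasFDerivAt f f' x :=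
  hasFDerivAt_iff_isLittleO_nhds_zero.2 <|
    (Asymptotics.IsBigO.of_bound C (Eventually.of_forall fun v => by simpa using h v))
      |>.trans_isLittleO (Asymptotics.isLittleO_norm_pow_id one_lt_two)

theorem eq_zero_of_forall_norm_smul_le_sq {Y : Type*} [NormedAddCommGroup Y] [NormedSpace ℝ Y]
    {w : Y} {M : ℝ} (h : ∀ t : ℝ, 0 < t → ‖t • w‖ ≤ M * t ^ 2) : w = 0 := by
  have hlim : Tendsto (fun t : ℝ => M * t) (𝓝[>] 0) (𝓝 0) := by
    simpa using ((continuous_const_mul M).tendsto (0 : ℝ)).mono_left nhdsWithin_le_nhds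
  refine norm_le_zero_iff.1 (ge_of_tendsto hlim ?_)
  filter_upwards [self_mem_nhdsWithin] with t (ht : 0 < t)
  refine le_of_mul_le_mul_left ?_ ht
  calc t * ‖w‖ = ‖t • w‖ := by rw [norm_smul, Real.norm_eq_abs, abs_of_pos ht]
    _ ≤ M * t ^ 2 := h t ht
    _ = t * (M * t) := by ring

section Jensen

variable {E Y : Type*} [NormedAddCommGroup E] [NormedSpace ℝ E]
  [NormedAddCommGroup Y] [NormedSpace ℝ Y]

def QuadraticJensenBound (C : ℝ) (F : E → Y) : Prop :=
  ∀ (a b : E) (t : ℝ), 0 ≤ t → t ≤ 1 →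
    ‖F (t • a + (1 - t) • b) - (t • F a + (1 - t) • F b)‖ ≤ C * (t * (1 - t) * ‖a - b‖ ^ 2)

theorem QuadraticJensenBound.comp_line {C : ℝ} {F : E → Y} (hF : QuadraticJensenBound C F)
    (x v : E) : QuadraticJensenBound (C * ‖v‖ ^ 2) fun t : ℝ => F (x + t • v) := by
  intro a b t ht₀ ht₁
  have h := hF (x + a • v) (x + b • v) t ht₀ ht₁
  rw [show t • (x + a • v) + (1 - t) • (x + b • v) = x + (t • a + (1 - t) • b) • v by module,
    show x + a • v - (x + b • v) = (a - b) • v by module, norm_smul, mul_pow] at h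
  rw [Real.norm_eq_abs, sq_abs] at h ⊢
  linarith

theorem QuadraticJensenBound.norm_smul_sub_smul_sub_smul_le {c : ℝ} {ψ : ℝ → Y}
    (hψ : QuadraticJensenBound c ψ) {p q r : ℝ} (hpq : p < q) (hqr : q < r) :
    ‖(r - p) • ψ q - (r - q) • ψ p - (q - p) • ψ r‖ ≤ c * ((r - q) * (q - p) * (r - p)) := by
  have hrp : 0 < r - p := by linarith
  set t := (r - q) / (r - p) with ht
  have h := hψ p r t (by positivity) (div_le_one_of_le₀ (by linarith) hrp.le)
  rw [show t • p + (1 - t) • r = q by simp only [ht, smul_eq_mul]; field_simp; ring,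
    Real.norm_eq_abs, sq_abs] at h
  have key : (r - p) • ψ q - (r - q) • ψ p - (q - p) • ψ r =
      (r - p) • (ψ q - (t • ψ p + (1 - t) • ψ r)) := by
    rw [smul_sub, smul_add, smul_smul, smul_smul, ht, mul_div_cancel₀ _ hrp.ne',
      show (r - p) * (1 - (r - q) / (r - p)) = q - p by field_simp; ring]
    abel
  rw [key, norm_smul, Real.norm_eq_abs, abs_of_pos hrp]
  calc (r - p) * ‖_‖ ≤ (r - p) * (c * (t * (1 - t) * (p - r) ^ 2)) :=
        mul_le_mul_of_nonneg_left h hrp.le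
    _ = c * ((r - q) * (q - p) * (r - p)) := by rw [ht]; field_simp; ring

theorem QuadraticJensenBound.norm_slope_sub_slope_le {c : ℝ} {ψ : ℝ → Y}
    (hψ : QuadraticJensenBound c ψ) {s t : ℝ} (hs : s ≠ 0) (ht : t ≠ 0) :
    ‖slope ψ 0 s - slope ψ 0 t‖ ≤ c * |s - t| := by
  wlog hst : s < t generalizing s t
  · rcases (not_lt.1 hst).lt_or_eq with hts | rfl
    · rw [norm_sub_rev, abs_sub_comm]
      exact this ht hs hts
    · simp
  have expand : ∀ u, ψ u = ψ 0 + u • slope ψ 0 u := fun u => by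
    simpa [add_comm] using (sub_smul_slope_vadd ψ 0 u).symm
  set d := slope ψ 0 s - slope ψ 0 t
  suffices |s * t| * ‖d‖ ≤ |s * t| * (c * (t - s)) by
    rw [abs_sub_comm, abs_of_pos (sub_pos.2 hst)]
    exact le_of_mul_le_mul_left this (abs_pos.2 (mul_ne_zero hs ht))
  -- In each sign case, the three-point bound for `0`, `s`, `t` (sorted) has left side `±(s * t) • d`.
  rcases hs.lt_or_gt with hs₀ | hs₀ <;> rcases ht.lt_or_gt with ht₀ | ht₀
  · have h := hψ.norm_smul_sub_smul_sub_smul_le hst ht₀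
    rw [expand s, expand t, show (0 - s) • (ψ 0 + t • slope ψ 0 t)
      - (0 - t) • (ψ 0 + s • slope ψ 0 s) - (t - s) • ψ 0 = (s * t) • d by module, norm_smul,
      Real.norm_eq_abs] at h
    rw [abs_of_pos (mul_pos_of_neg_of_neg hs₀ ht₀)] at h ⊢
    linarith
  · have h := hψ.norm_smul_sub_smul_sub_smul_le hs₀ ht₀
    rw [expand s, expand t, show (t - s) • ψ 0 - (t - 0) • (ψ 0 + s • slope ψ 0 s)
      - (0 - s) • (ψ 0 + t • slope ψ 0 t) = -((s * t) • d) by module, norm_neg, norm_smul,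
      Real.norm_eq_abs] at h
    rw [abs_of_neg (mul_neg_of_neg_of_pos hs₀ ht₀)] at h ⊢
    linarith
  · linarith
  · have h := hψ.norm_smul_sub_smul_sub_smul_le hs₀ hst
    rw [expand s, expand t, show (t - 0) • (ψ 0 + s • slope ψ 0 s) - (t - s) • ψ 0
      - (s - 0) • (ψ 0 + t • slope ψ 0 t) = (s * t) • d by module, norm_smul,
      Real.norm_eq_abs] at h
    rw [abs_of_pos (mul_pos hs₀ ht₀)] at h ⊢
    linarith

theorem QuadraticJensenBound.norm_sub_sub_smul_deriv_le [CompleteSpace Y] {c : ℝ} {ψ : ℝ → Y}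
    (hψ : QuadraticJensenBound c ψ) (t : ℝ) : ‖ψ t - ψ 0 - t • deriv ψ 0‖ ≤ c * t ^ 2 := by
  have hmem : ∀ᶠ p : ℝ × ℝ in 𝓝[≠] 0 ×ˢ 𝓝[≠] 0, p.1 ≠ 0 ∧ p.2 ≠ 0 :=
    prod_mem_prod self_mem_nhdsWithin self_mem_nhdsWithin
  have hcauchy : Cauchy (map (slope ψ 0) (𝓝[≠] 0)) := by
    rw [cauchy_map_iff', tendsto_uniformity_iff_dist_tendsto_zero]
    have hlim : Tendsto (fun p : ℝ × ℝ => c * |p.1 - p.2|) (𝓝[≠] 0 ×ˢ 𝓝[≠] 0) (𝓝 0) := by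
      have : Tendsto (fun p : ℝ × ℝ => c * |p.1 - p.2|) (𝓝 (0, 0)) (𝓝 0) := by
        simpa using ((continuous_fst.sub continuous_snd).abs.const_mul c).tendsto (0, 0)
      rw [nhds_prod_eq] at this
      exact this.mono_left (prod_mono nhdsWithin_le_nhds nhdsWithin_le_nhds)
    refine squeeze_zero' (Eventually.of_forall fun _ => dist_nonneg) ?_ hlim
    filter_upwards [hmem] with p hp
    rw [dist_eq_norm]
    exact hψ.norm_slope_sub_slope_le hp.1 hp.2
  obtain ⟨W, hW⟩ := cauchy_map_iff_exists_tendsto.1 hcauchy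
  rw [(hasDerivAt_iff_tendsto_slope.2 hW).deriv]
  rcases eq_or_ne t 0 with rfl | ht
  · simp
  have hbound : ‖slope ψ 0 t - W‖ ≤ c * |t| := by
    have hlim : Tendsto (fun s => c * |t - s|) (𝓝 0) (𝓝 (c * |t|)) := by
      simpa using ((continuous_const.sub continuous_id).abs.const_mul c).tendsto 0
    refine le_of_tendsto_of_tendsto ((tendsto_const_nhds.sub hW).norm)
      (hlim.mono_left nhdsWithin_le_nhds) ?_
    filter_upwards [self_mem_nhdsWithin] with s hs
    exact hψ.norm_slope_sub_slope_le ht hs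
  calc ‖ψ t - ψ 0 - t • W‖ = |t| * ‖slope ψ 0 t - W‖ := by
        rw [← Real.norm_eq_abs, ← norm_smul, smul_sub, slope_def_module, sub_zero,
          smul_inv_smul₀ ht]
    _ ≤ |t| * (c * |t|) := mul_le_mul_of_nonneg_left hbound (abs_nonneg t)
    _ = c * t ^ 2 := by rw [← sq_abs t]; ring

theorem QuadraticJensenBound.norm_sub_sub_lineDeriv_le [CompleteSpace Y] {C : ℝ} {F : E → Y}
    (hF : QuadraticJensenBound C F) (x v : E) :
    ‖F (x + v) - F x - lineDeriv ℝ F x v‖ ≤ C * ‖v‖ ^ 2 := by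
  simpa [lineDeriv] using (hF.comp_line x v).norm_sub_sub_smul_deriv_le 1

theorem QuadraticJensenBound.norm_lineDeriv_add_sub_le [CompleteSpace Y] {C : ℝ} {F : E → Y}
    (hF : QuadraticJensenBound C F) (hC : 0 ≤ C) (x u v : E) :
    ‖lineDeriv ℝ F x (u + v) - lineDeriv ℝ F x u - lineDeriv ℝ F x v‖ ≤
      4 * C * (‖u‖ + ‖v‖) ^ 2 := by
  set R : E → Y := fun w => F (x + w) - F x - lineDeriv ℝ F x w
  have hR : ∀ w, ‖R w‖ ≤ C * ‖w‖ ^ 2 := hF.norm_sub_sub_lineDeriv_le x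
  set J := F (x + (u + v)) -
    ((1 / 2 : ℝ) • F (x + (2 : ℝ) • u) + (1 - 1 / 2 : ℝ) • F (x + (2 : ℝ) • v))
  have hJ : ‖J‖ ≤ C * ‖u - v‖ ^ 2 := by
    have h := hF (x + (2 : ℝ) • u) (x + (2 : ℝ) • v) (1 / 2) (by norm_num) (by norm_num)
    rw [show (1 / 2 : ℝ) • (x + (2 : ℝ) • u) + (1 - 1 / 2 : ℝ) • (x + (2 : ℝ) • v) = x + (u + v) by
      module, show x + (2 : ℝ) • u - (x + (2 : ℝ) • v) = (2 : ℝ) • (u - v) by module,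
      norm_smul, Real.norm_two] at h
    calc ‖J‖ ≤ _ := h
      _ = C * ‖u - v‖ ^ 2 := by ring
  have key : lineDeriv ℝ F x (u + v) - lineDeriv ℝ F x u - lineDeriv ℝ F x v =
      J - R (u + v) + (1 / 2 : ℝ) • (R ((2 : ℝ) • u) + R ((2 : ℝ) • v)) := by
    simp only [R, J, lineDeriv_smul]
    module
  have h2u := hR ((2 : ℝ) • u)
  have h2v := hR ((2 : ℝ) • v)
  rw [norm_smul, Real.norm_two] at h2u h2v
  calc _ ≤ ‖J‖ + ‖R (u + v)‖ + 1 / 2 * (‖R ((2 : ℝ) • u)‖ + ‖R ((2 : ℝ) • v)‖) := by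
        rw [key]
        refine (norm_add_le _ _).trans (add_le_add (norm_sub_le _ _) ?_)
        rw [norm_smul, Real.norm_eq_abs, abs_of_pos one_half_pos]
        gcongr
        exact norm_add_le _ _
    _ ≤ C * ‖u - v‖ ^ 2 + C * ‖u + v‖ ^ 2 + 1 / 2 * (C * (2 * ‖u‖) ^ 2 + C * (2 * ‖v‖) ^ 2) := by
        gcongr
        exact hR _
    _ ≤ 4 * C * (‖u‖ + ‖v‖) ^ 2 := by
        have hsub := pow_le_pow_left₀ (norm_nonneg (u - v)) (norm_sub_le u v) 2
        have hadd := pow_le_pow_left₀ (norm_nonneg (u + v)) (norm_add_le u v) 2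
        nlinarith [mul_le_mul_of_nonneg_left hsub hC, mul_le_mul_of_nonneg_left hadd hC,
          mul_nonneg hC (mul_nonneg (norm_nonneg u) (norm_nonneg v))]

theorem QuadraticJensenBound.lineDeriv_add [CompleteSpace Y] {C : ℝ} {F : E → Y}
    (hF : QuadraticJensenBound C F) (hC : 0 ≤ C) (x u v : E) :
    lineDeriv ℝ F x (u + v) = lineDeriv ℝ F x u + lineDeriv ℝ F x v := by
  -- By homogeneity of `lineDeriv` the defect scales linearly in `t`, its bound quadratically.
  have hzero := eq_zero_of_forall_norm_smul_le_sq (M := 4 * C * (‖u‖ + ‖v‖) ^ 2) fun t ht => calc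
    ‖t • (lineDeriv ℝ F x (u + v) - lineDeriv ℝ F x u - lineDeriv ℝ F x v)‖
        = ‖lineDeriv ℝ F x (t • u + t • v) - lineDeriv ℝ F x (t • u) -
            lineDeriv ℝ F x (t • v)‖ := by
          rw [← smul_add, lineDeriv_smul, lineDeriv_smul, lineDeriv_smul, smul_sub, smul_sub]
    _ ≤ 4 * C * (‖t • u‖ + ‖t • v‖) ^ 2 := hF.norm_lineDeriv_add_sub_le hC x _ _
    _ = 4 * C * (‖u‖ + ‖v‖) ^ 2 * t ^ 2 := by
          rw [norm_smul, norm_smul, Real.norm_eq_abs, abs_of_pos ht]; ring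
  rwa [sub_sub, sub_eq_zero] at hzero

theorem QuadraticJensenBound.differentiableAt [CompleteSpace Y] {C : ℝ} {F : E → Y}
    (hF : QuadraticJensenBound C F) (hC : 0 ≤ C) {x : E} (hFx : ContinuousAt F x) :
    DifferentiableAt ℝ F x := by
  let D : E →ₗ[ℝ] Y :=
    { toFun := lineDeriv ℝ F x
      map_add' := hF.lineDeriv_add hC x
      map_smul' := fun _ _ => lineDeriv_smul }
  have hR : ∀ v, ‖F (x + v) - F x - D v‖ ≤ C * ‖v‖ ^ 2 := hF.norm_sub_sub_lineDeriv_le x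
  have hcont : Continuous D := by
    refine continuous_of_continuousAt_zero D ?_
    have hincr : Tendsto (fun v => F (x + v) - F x) (𝓝 0) (𝓝 0) := by
      have : Tendsto (fun v => x + v) (𝓝 0) (𝓝 x) := by
        simpa using (continuous_const_add x).tendsto (0 : E)
      simpa using (hFx.tendsto.comp this).sub_const (F x)
    have hrem : Tendsto (fun v => F (x + v) - F x - D v) (𝓝 0) (𝓝 0) :=
      squeeze_zero_norm hR (by simpa using ((continuous_norm.pow 2).const_mul C).tendsto (0 : E))
    simpa [ContinuousAt] using hincr.sub hrem
  exact (hasFDerivAt_of_norm_sub_sub_le (f' := ⟨D, hcont⟩) hR).differentiableAt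

theorem QuadraticJensenBound.norm_sub_sub_fderiv_le [CompleteSpace Y] {C : ℝ} {F : E → Y}
    (hF : QuadraticJensenBound C F) (hC : 0 ≤ C) {x : E} (hFx : ContinuousAt F x) (v : E) :
    ‖F (x + v) - F x - fderiv ℝ F x v‖ ≤ C * ‖v‖ ^ 2 := by
  rw [← (hF.differentiableAt hC hFx).lineDeriv_eq_fderiv]
  exact hF.norm_sub_sub_lineDeriv_le x v

end Jensen

section Hilbert

open InnerProductSpace

variable {X : Type*} [NormedAddCommGroup X] [InnerProductSpace ℝ X]

theorem norm_sub_sq_le_mul_inner_of_convex_of_smooth {f : X → ℝ} {f' : X → X} {M : ℝ}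
    (hM : 0 < M) (hconv : ∀ z v, f z + ⟪f' z, v⟫_ℝ ≤ f (z + v))
    (hsmooth : ∀ z v, f (z + v) ≤ f z + ⟪f' z, v⟫_ℝ + M / 2 * ‖v‖ ^ 2) (x y : X) :
    ‖f' x - f' y‖ ^ 2 ≤ M * ⟪f' x - f' y, x - y⟫_ℝ := by
  -- Compare the convexity bound at `a` and the smoothness bound at `b` at the point
  -- `b - M⁻¹ • (f' b - f' a)`, which minimizes the quadratic upper bound at `b`.
  have key : ∀ a b, f a + ⟪f' a, b - a⟫_ℝ + ‖f' b - f' a‖ ^ 2 / (2 * M) ≤ f b := by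
    intro a b
    generalize hr : f' b - f' a = r
    have h₁ := hconv a (b - a - M⁻¹ • r)
    have h₂ := hsmooth b (-(M⁻¹ • r))
    rw [show a + (b - a - M⁻¹ • r) = b + -(M⁻¹ • r) by abel, inner_sub_right,
      inner_smul_right] at h₁
    rw [inner_neg_right, inner_smul_right, norm_neg, norm_smul, Real.norm_eq_abs, abs_inv,
      abs_of_pos hM] at h₂
    have hinner : M⁻¹ * ⟪f' b, r⟫_ℝ - M⁻¹ * ⟪f' a, r⟫_ℝ = 2 * (‖r‖ ^ 2 / (2 * M)) := by
      rw [← mul_sub, ← inner_sub_left, hr, real_inner_self_eq_norm_sq]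
      field_simp
    have hsq : M / 2 * (M⁻¹ * ‖r‖) ^ 2 = ‖r‖ ^ 2 / (2 * M) := by field_simp
    linarith
  have hsum := add_le_add (key x y) (key y x)
  rw [norm_sub_rev (f' y)] at hsum
  have hhalf : ‖f' x - f' y‖ ^ 2 / (2 * M) + ‖f' x - f' y‖ ^ 2 / (2 * M) =
      M⁻¹ * ‖f' x - f' y‖ ^ 2 := by field_simp; ring
  have : M⁻¹ * ‖f' x - f' y‖ ^ 2 ≤ ⟪f' x - f' y, x - y⟫_ℝ := by
    simp only [inner_sub_left, inner_sub_right] at hsum ⊢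
    linarith
  rwa [inv_mul_le_iff₀ hM] at this

theorem norm_sub_le_of_abs_sub_sub_inner_le {g : X → ℝ} {g' : X → X} {K : ℝ} (hK : 0 < K)
    (h : ∀ z v, |g (z + v) - g z - ⟪g' z, v⟫_ℝ| ≤ K / 2 * ‖v‖ ^ 2) (x y : X) :
    ‖g' x - g' y‖ ≤ K * ‖x - y‖ := by
  have hcoco := norm_sub_sq_le_mul_inner_of_convex_of_smooth (f := fun z => g z + K / 2 * ‖z‖ ^ 2)
    (f' := fun z => g' z + K • z) (M := 2 * K) (by positivity)
    (fun z v => by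
      have := (abs_le.1 (h z v)).1
      simp only [inner_add_left, real_inner_smul_left, norm_add_sq_real] at this ⊢
      linarith)
    (fun z v => by
      have := (abs_le.1 (h z v)).2
      simp only [inner_add_left, real_inner_smul_left, norm_add_sq_real] at this ⊢
      linarith) x y
  rw [show g' x + K • x - (g' y + K • y) = (g' x - g' y) + K • (x - y) by module,
    norm_add_sq_real, inner_add_left, real_inner_smul_left, real_inner_smul_right, norm_smul,
    real_inner_self_eq_norm_sq, Real.norm_eq_abs, abs_of_pos hK] at hcoco
  have hsq : ‖g' x - g' y‖ ^ 2 ≤ (K * ‖x - y‖) ^ 2 := by nlinarith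
  exact (pow_le_pow_iff_left₀ (norm_nonneg _) (by positivity) two_ne_zero).1 hsq

theorem norm_sub_le_of_norm_sub_sub_le_s3 [CompleteSpace X] {Y : Type*} [NormedAddCommGroup Y]
    [NormedSpace ℝ Y] {F : X → Y} {F' : X → X →L[ℝ] Y} {L : ℝ} (hL : 0 < L)
    (h : ∀ x v, ‖F (x + v) - F x - F' x v‖ ≤ L / 2 * ‖v‖ ^ 2) (x y : X) :
    ‖F' x - F' y‖ ≤ L * ‖x - y‖ := by
  refine ContinuousLinearMap.opNorm_le_bound _ (by positivity) fun v => ?_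
  refine NormedSpace.norm_le_dual_bound ℝ _ (by positivity) fun φ => ?_
  rcases eq_or_ne φ 0 with rfl | hφ
  · simp
  let g' : X → X := fun z => (toDual ℝ X).symm (φ.comp (F' z))
  have hg' : ∀ z w, ⟪g' z, w⟫_ℝ = φ (F' z w) := fun z w => toDual_symm_apply
  have hlip := norm_sub_le_of_abs_sub_sub_inner_le (g := fun z => φ (F z)) (g' := g')
    (K := ‖φ‖ * L) (by positivity) (fun z v => by
      rw [hg', ← map_sub, ← map_sub, ← Real.norm_eq_abs]
      calc ‖φ (F (z + v) - F z - F' z v)‖ ≤ ‖φ‖ * (L / 2 * ‖v‖ ^ 2) :=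
            φ.le_opNorm_of_le (h z v)
        _ = ‖φ‖ * L / 2 * ‖v‖ ^ 2 := by ring) x y
  calc ‖φ ((F' x - F' y) v)‖ = |⟪g' x - g' y, v⟫_ℝ| := by
        rw [inner_sub_left, hg', hg', ← map_sub, Real.norm_eq_abs, sub_apply]
    _ ≤ ‖g' x - g' y‖ * ‖v‖ := abs_real_inner_le_norm _ _
    _ ≤ ‖φ‖ * L * ‖x - y‖ * ‖v‖ := by gcongr
    _ = L * ‖x - y‖ * ‖v‖ * ‖φ‖ := by ring

end Hilbert

theorem differentiable_lipschitz_of_jensen_inequality_general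
    {X : Type*} [NormedAddCommGroup X] [InnerProductSpace ℝ X] [CompleteSpace X]
    {Y : Type*} [NormedAddCommGroup Y] [NormedSpace ℝ Y] [CompleteSpace Y]
    (F : X → Y) (hF : Continuous F) (L : ℝ) (hL : 0 < L)
    (hineq : ∀ (n : ℕ) (x : Fin n → X) (lam : Fin n → ℝ), (∀ i, 0 ≤ lam i) → ∑ i, lam i = 1 →
      ‖F (∑ i, lam i • x i) - ∑ i, lam i • F (x i)‖ ≤
        L / 2 * ∑ i, ∑ j, if i < j then lam i * lam j * ‖x i - x j‖ ^ 2 else 0) :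
    Differentiable ℝ F ∧ ∀ x y : X, ‖fderiv ℝ F x - fderiv ℝ F y‖ ≤ L * ‖x - y‖ := by
  have hJ : QuadraticJensenBound (L / 2) F := fun a b t ht₀ ht₁ => by
    have h := hineq 2 ![a, b] ![t, 1 - t] (fun i => by fin_cases i <;> simp [ht₀, ht₁])
      (by simp)
    simpa [Fin.sum_univ_two] using h
  have hL₂ : 0 ≤ L / 2 := by positivity
  exact ⟨fun x => hJ.differentiableAt hL₂ hF.continuousAt,
    norm_sub_le_of_norm_sub_sub_le_s3 hL fun x => hJ.norm_sub_sub_fderiv_le hL₂ hF.continuousAt⟩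

/-- If `F : X → Y` (with `X` a real Hilbert space and `Y` a reflexive real Banach space) is
continuous and satisfies the Jensen-type inequality for all convex combinations, then `F` is
Fréchet differentiable and its derivative is `L`-Lipschitz in the operator norm. -/
theorem differentiable_lipschitz_of_jensen_inequality
    {X : Type*} [NormedAddCommGroup X] [InnerProductSpace ℝ X] [CompleteSpace X]
    {Y : Type*} [NormedAddCommGroup Y] [NormedSpace ℝ Y] [CompleteSpace Y]
    (hrefl : Function.Surjective (NormedSpace.inclusionInDoubleDual ℝ Y))
    (F : X → Y) (hF : Continuous F) (L : ℝ) (hL : 0 < L)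
    (hineq : ∀ (n : ℕ) (x : Fin n → X) (lam : Fin n → ℝ), (∀ i, 0 ≤ lam i) → ∑ i, lam i = 1 →
      ‖F (∑ i, lam i • x i) - ∑ i, lam i • F (x i)‖ ≤
        L / 2 * ∑ i, ∑ j, if i < j then lam i * lam j * ‖x i - x j‖ ^ 2 else 0) :
    Differentiable ℝ F ∧ ∀ x y : X, ‖fderiv ℝ F x - fderiv ℝ F y‖ ≤ L * ‖x - y‖ :=
  differentiable_lipschitz_of_jensen_inequality_general F hF L hL hineq
end

section
/- Let X be a real Hilbert space, L > 0, and let f : X → ℝ be Fréchet differentiable such that its gradient ∇f : X → X satisfies: for any finitely many points x₁,…,xₙ ∈ X and nonnegative weights λ₁,…,λₙ with ∑ᵢ λᵢ = 1, ‖∇f(∑ᵢ λᵢ xᵢ) − ∑ᵢ λᵢ ∇f(xᵢ)‖ ≤ (L/2) · ∑_{1 ≤ i < j ≤ n} λᵢ λⱼ ‖xᵢ − xⱼ‖². Then ∇f is Fréchet differentiable on X and its derivative (the Hessian of f) is L-Lipschitz continuous with respect to the operator norm. -/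
/-!
The hypothesis for two points says that `g = ∇f` satisfies
`‖g ((1 - t) a + t b) - (1 - t) g a - t g b‖ ≤ L / 2 (1 - t) t ‖a - b‖²`.
Comparing slopes along a ray, the one-sided directional derivatives `A_x v` of `g` exist and
`‖g (x + v) - g x - A_x v‖ ≤ L / 2 ‖v‖²`; the midpoint case and the parallelogram law make `A_x`
linear. As `g` is a gradient, `A_x` is symmetric by the symmetry of second derivatives, hence
bounded by Hellinger–Toeplitz, and so it is the Fréchet derivative of `g` at `x`. Finally the
second difference `g (z + h + k) - g (z + h) - g (z + k) + g z` is at most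
`L / 2 (‖h‖² + ‖k‖²)`; cutting `h` into `n` pieces and taking `k` of size `1 / n` sharpens this
to `‖A_{z+h} - A_z‖ ≤ L ‖h‖`.
-/

open Filter Topology Asymptotics

theorem tendsto_nhdsGT_of_norm_sub_le {F : Type*} [NormedAddCommGroup F] {φ : ℝ → F} {l : F}
    {C : ℝ} (h : ∀ t, 0 < t → ‖φ t - l‖ ≤ C * t) : Tendsto φ (𝓝[>] 0) (𝓝 l) := by
  rw [tendsto_iff_norm_sub_tendsto_zero]
  have hC : Tendsto (fun t : ℝ => C * t) (𝓝[>] 0) (𝓝 0) := by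
    simpa using ((continuous_const_mul C).tendsto 0).mono_left nhdsWithin_le_nhds
  exact squeeze_zero' (Eventually.of_forall fun _ => norm_nonneg _)
    (eventually_nhdsWithin_of_forall h) hC

section NormedSpace

variable {E F : Type*} [NormedAddCommGroup E] [NormedSpace ℝ E] [NormedAddCommGroup F]
  [NormedSpace ℝ F]

def JensenGapBound (L : ℝ) (g : E → F) : Prop :=
  ∀ (a b : E) (t : ℝ), 0 ≤ t → t ≤ 1 →
    ‖g ((1 - t) • a + t • b) - ((1 - t) • g a + t • g b)‖ ≤ L / 2 * ((1 - t) * t * ‖a - b‖ ^ 2)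

-- Junk (`limUnder` of a divergent map) unless `g` has a one-sided derivative at `x` along `h`.
noncomputable def rightLineDeriv (g : E → F) (x h : E) : F :=
  limUnder (𝓝[>] (0 : ℝ)) fun t => t⁻¹ • (g (x + t • h) - g x)

namespace JensenGapBound

variable {L : ℝ} {g : E → F}

theorem of_forall_fin
    (h : ∀ (n : ℕ) (x : Fin n → E) (lam : Fin n → ℝ), (∀ i, 0 ≤ lam i) → ∑ i, lam i = 1 →
      ‖g (∑ i, lam i • x i) - ∑ i, lam i • g (x i)‖ ≤
        L / 2 * ∑ i, ∑ j, if i < j then lam i * lam j * ‖x i - x j‖ ^ 2 else 0) :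
    JensenGapBound L g := by
  intro a b t ht₀ ht₁
  have h₂ := h 2 ![a, b] ![1 - t, t] (fun i => by fin_cases i <;> simp [ht₀, ht₁]) (by simp)
  simpa [Fin.sum_univ_two] using h₂

theorem norm_add_add_sub_two_smul_le (hS : JensenGapBound L g) (z v : E) :
    ‖g (z + v) + g (z - v) - (2 : ℝ) • g z‖ ≤ L * ‖v‖ ^ 2 := by
  have h := hS (z + v) (z - v) (1 / 2) (by norm_num) (by norm_num)
  rw [show ((1 : ℝ) - 1 / 2) • (z + v) + (1 / 2 : ℝ) • (z - v) = z by module,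
    show z + v - (z - v) = (2 : ℝ) • v by module, norm_smul,
    show g z - ((1 - 1 / 2 : ℝ) • g (z + v) + (1 / 2 : ℝ) • g (z - v)) =
      -(1 / 2 : ℝ) • (g (z + v) + g (z - v) - (2 : ℝ) • g z) by module, norm_smul] at h
  norm_num at h
  linarith

theorem norm_slope_sub_slope_le (hS : JensenGapBound L g) (x h : E) {s t : ℝ} (hs : 0 < s)
    (hst : s ≤ t) :
    ‖s⁻¹ • (g (x + s • h) - g x) - t⁻¹ • (g (x + t • h) - g x)‖ ≤
      L / 2 * ((t - s) * ‖h‖ ^ 2) := by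
  have ht : 0 < t := hs.trans_le hst
  have h₁ := hS x (x + t • h) (s / t) (by positivity) ((div_le_one ht).2 hst)
  rw [show (1 - s / t) • x + (s / t) • (x + t • h) = x + s • h by
      rw [smul_add, smul_smul, div_mul_cancel₀ _ ht.ne']; module,
    show g (x + s • h) - ((1 - s / t) • g x + (s / t) • g (x + t • h)) =
      s • (s⁻¹ • (g (x + s • h) - g x) - t⁻¹ • (g (x + t • h) - g x)) by
      rw [smul_sub, smul_smul, smul_smul, mul_inv_cancel₀ hs.ne', ← div_eq_mul_inv]; module,
    show x - (x + t • h) = -(t • h) by abel, norm_neg, norm_smul, norm_smul,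
    Real.norm_of_nonneg hs.le, Real.norm_of_nonneg ht.le] at h₁
  refine le_of_mul_le_mul_left (h₁.trans_eq ?_) hs
  field_simp

variable [CompleteSpace F]

theorem tendsto_rightLineDeriv (hS : JensenGapBound L g) (hL : 0 ≤ L) (x h : E) :
    Tendsto (fun t : ℝ => t⁻¹ • (g (x + t • h) - g x)) (𝓝[>] 0) (𝓝 (rightLineDeriv g x h)) := by
  set C := L / 2 * ‖h‖ ^ 2
  have hdist : ∀ s t : ℝ, 0 < s → 0 < t →
      dist (s⁻¹ • (g (x + s • h) - g x)) (t⁻¹ • (g (x + t • h) - g x)) ≤ C * |t - s| := by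
    intro s t hs ht
    rw [dist_eq_norm]
    rcases le_total s t with hst | hts
    · rw [abs_of_nonneg (sub_nonneg.2 hst)]
      exact (hS.norm_slope_sub_slope_le x h hs hst).trans_eq (by ring)
    · rw [norm_sub_rev, abs_of_nonpos (sub_nonpos.2 hts)]
      exact (hS.norm_slope_sub_slope_le x h ht hts).trans_eq (by ring)
  refine tendsto_nhds_limUnder (cauchy_map_iff_exists_tendsto.1 ?_)
  refine Metric.cauchy_iff.2 ⟨inferInstance, fun ε hε => ?_⟩
  have hδ : 0 < ε / (C + 1) := by positivity
  refine ⟨_, image_mem_map (Ioo_mem_nhdsGT hδ), ?_⟩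
  rintro _ ⟨s, hs, rfl⟩ _ ⟨t, ht, rfl⟩
  calc _ ≤ C * |t - s| := hdist s t hs.1 ht.1
    _ ≤ C * (ε / (C + 1)) := by
        gcongr
        exact abs_sub_lt_iff.2 ⟨by linarith [hs.1, ht.2], by linarith [hs.2, ht.1]⟩ |>.le
    _ < ε := by
        have hC : 0 ≤ C := by positivity
        rw [mul_div_assoc', div_lt_iff₀ (by positivity)]
        nlinarith

theorem norm_slope_sub_rightLineDeriv_le (hS : JensenGapBound L g) (hL : 0 ≤ L) (x h : E)
    {t : ℝ} (ht : 0 < t) :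
    ‖t⁻¹ • (g (x + t • h) - g x) - rightLineDeriv g x h‖ ≤ L / 2 * (t * ‖h‖ ^ 2) := by
  refine le_of_tendsto ((tendsto_const_nhds.sub (hS.tendsto_rightLineDeriv hL x h)).norm) ?_
  filter_upwards [Ioo_mem_nhdsGT ht] with s hs
  rw [norm_sub_rev]
  refine (hS.norm_slope_sub_slope_le x h hs.1 hs.2.le).trans ?_
  gcongr
  linarith [hs.1]

theorem rightLineDeriv_smul_of_pos (hS : JensenGapBound L g) (hL : 0 ≤ L) (x h : E) {c : ℝ}
    (hc : 0 < c) : rightLineDeriv g x (c • h) = c • rightLineDeriv g x h := by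
  refine (tendsto_nhdsGT_of_norm_sub_le (C := c * (L / 2 * (c * ‖h‖ ^ 2)))
    fun t ht => ?_).limUnder_eq
  rw [smul_smul, show t⁻¹ • (g (x + (t * c) • h) - g x) - c • rightLineDeriv g x h =
      c • ((t * c)⁻¹ • (g (x + (t * c) • h) - g x) - rightLineDeriv g x h) by
    match_scalars <;> field_simp,
    norm_smul, Real.norm_of_nonneg hc.le]
  calc c * _ ≤ c * (L / 2 * ((t * c) * ‖h‖ ^ 2)) :=
        mul_le_mul_of_nonneg_left
          (hS.norm_slope_sub_rightLineDeriv_le hL x h (by positivity)) hc.le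
    _ = _ := by ring

theorem rightLineDeriv_neg (hS : JensenGapBound L g) (hL : 0 ≤ L) (x h : E) :
    rightLineDeriv g x (-h) = -rightLineDeriv g x h := by
  have hsum := (hS.tendsto_rightLineDeriv hL x (-h)).add (hS.tendsto_rightLineDeriv hL x h)
  have hzero : Tendsto (fun t : ℝ => t⁻¹ • (g (x + t • -h) - g x) + t⁻¹ • (g (x + t • h) - g x))
      (𝓝[>] 0) (𝓝 0) := by
    refine tendsto_nhdsGT_of_norm_sub_le (C := L * ‖h‖ ^ 2) fun t ht => ?_
    rw [sub_zero, ← smul_add, smul_neg, ← sub_eq_add_neg, norm_smul,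
      Real.norm_of_nonneg (inv_pos.2 ht).le,
      show g (x - t • h) - g x + (g (x + t • h) - g x) =
        g (x + t • h) + g (x - t • h) - (2 : ℝ) • g x by module]
    calc t⁻¹ * _ ≤ t⁻¹ * (L * ‖t • h‖ ^ 2) :=
          mul_le_mul_of_nonneg_left (hS.norm_add_add_sub_two_smul_le x (t • h)) (inv_pos.2 ht).le
      _ = L * ‖h‖ ^ 2 * t := by
          rw [norm_smul, Real.norm_of_nonneg ht.le]; field_simp
  exact eq_neg_of_add_eq_zero_left (tendsto_nhds_unique hsum hzero)

end JensenGapBound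

end NormedSpace

section InnerProductSpace

variable {E F : Type*} [NormedAddCommGroup E] [InnerProductSpace ℝ E] [NormedAddCommGroup F]
  [NormedSpace ℝ F]

namespace JensenGapBound

variable {L : ℝ} {g : E → F}

theorem norm_sub_sub_sub_le (hS : JensenGapBound L g) (z h k : E) :
    ‖g (z + h + k) - g (z + h) - (g (z + k) - g z)‖ ≤ L / 2 * (‖h‖ ^ 2 + ‖k‖ ^ 2) := by
  set m := z + (2 : ℝ)⁻¹ • (h + k)
  have h₁ := hS.norm_add_add_sub_two_smul_le m ((2 : ℝ)⁻¹ • (h + k))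
  have h₂ := hS.norm_add_add_sub_two_smul_le m ((2 : ℝ)⁻¹ • (h - k))
  rw [show m + (2 : ℝ)⁻¹ • (h + k) = z + h + k by module,
    show m - (2 : ℝ)⁻¹ • (h + k) = z by module, norm_smul] at h₁
  rw [show m + (2 : ℝ)⁻¹ • (h - k) = z + h by module,
    show m - (2 : ℝ)⁻¹ • (h - k) = z + k by module, norm_smul] at h₂
  have hpar := parallelogram_law_with_norm ℝ h k
  calc _ = ‖(g (z + h + k) + g z - (2 : ℝ) • g m) -
        (g (z + h) + g (z + k) - (2 : ℝ) • g m)‖ := by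
        congr 1; abel
    _ ≤ L * (‖(2 : ℝ)⁻¹‖ * ‖h + k‖) ^ 2 + L * (‖(2 : ℝ)⁻¹‖ * ‖h - k‖) ^ 2 :=
        (norm_sub_le _ _).trans (add_le_add h₁ h₂)
    _ = L / 2 * (‖h‖ ^ 2 + ‖k‖ ^ 2) := by
        norm_num
        linear_combination (L / 4) * hpar

theorem norm_sub_sub_sub_le_of_nat (hS : JensenGapBound L g) (z h k : E) {n : ℕ} (hn : 0 < n) :
    ‖g (z + h + k) - g (z + h) - (g (z + k) - g z)‖ ≤ L / 2 * (‖h‖ ^ 2 / n + n * ‖k‖ ^ 2) := by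
  set p := (n : ℝ)⁻¹ • h
  have hp : (n : ℝ) • p = h := by simp [p, smul_smul, (Nat.cast_pos.2 hn).ne']
  have htel := Finset.sum_range_sub (fun i : ℕ => g (z + (i : ℝ) • p + k) - g (z + (i : ℝ) • p)) n
  simp only [hp, Nat.cast_zero, zero_smul, add_zero, Nat.cast_succ] at htel
  rw [← htel]
  calc _ ≤ ∑ i ∈ Finset.range n, L / 2 * (‖p‖ ^ 2 + ‖k‖ ^ 2) := by
        refine norm_sum_le_of_le _ fun i _ => ?_
        have := hS.norm_sub_sub_sub_le (z + (i : ℝ) • p) p k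
        rwa [show z + (i : ℝ) • p + p = z + ((i : ℝ) + 1) • p by module] at this
    _ = _ := by
        rw [Finset.sum_const, Finset.card_range, nsmul_eq_mul, norm_smul, norm_inv,
          Real.norm_natCast]
        field_simp

variable [CompleteSpace F]

theorem rightLineDeriv_add (hS : JensenGapBound L g) (hL : 0 ≤ L) (x h k : E) :
    rightLineDeriv g x (h + k) = rightLineDeriv g x h + rightLineDeriv g x k := by
  have hlim := ((hS.tendsto_rightLineDeriv hL x (h + k)).sub
    (hS.tendsto_rightLineDeriv hL x h)).sub (hS.tendsto_rightLineDeriv hL x k)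
  have hzero : Tendsto (fun t : ℝ => t⁻¹ • (g (x + t • (h + k)) - g x) -
      t⁻¹ • (g (x + t • h) - g x) - t⁻¹ • (g (x + t • k) - g x)) (𝓝[>] 0) (𝓝 0) := by
    refine tendsto_nhdsGT_of_norm_sub_le (C := L / 2 * (‖h‖ ^ 2 + ‖k‖ ^ 2)) fun t ht => ?_
    rw [sub_zero, ← smul_sub, ← smul_sub, norm_smul, Real.norm_of_nonneg (inv_pos.2 ht).le,
      show g (x + t • (h + k)) - g x - (g (x + t • h) - g x) - (g (x + t • k) - g x) =
        g (x + t • h + t • k) - g (x + t • h) - (g (x + t • k) - g x) by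
        rw [smul_add, add_assoc]; abel]
    calc t⁻¹ * _ ≤ t⁻¹ * (L / 2 * (‖t • h‖ ^ 2 + ‖t • k‖ ^ 2)) :=
          mul_le_mul_of_nonneg_left (hS.norm_sub_sub_sub_le x _ _) (inv_pos.2 ht).le
      _ = L / 2 * (‖h‖ ^ 2 + ‖k‖ ^ 2) * t := by
          rw [norm_smul, norm_smul, Real.norm_of_nonneg ht.le]; field_simp
  rw [← sub_eq_zero, ← sub_sub]
  exact tendsto_nhds_unique hlim hzero

theorem rightLineDeriv_smul (hS : JensenGapBound L g) (hL : 0 ≤ L) (x : E) (c : ℝ) (h : E) :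
    rightLineDeriv g x (c • h) = c • rightLineDeriv g x h := by
  rcases lt_trichotomy c 0 with hc | rfl | hc
  · rw [show c • h = (-c) • -h by module, hS.rightLineDeriv_smul_of_pos hL x _ (neg_pos.2 hc),
      hS.rightLineDeriv_neg hL, smul_neg, neg_smul, neg_neg]
  · have h0 : rightLineDeriv g x 0 = 0 := by simpa using hS.rightLineDeriv_add hL x 0 0
    simp [h0]
  · exact hS.rightLineDeriv_smul_of_pos hL x h hc

noncomputable def rightLineDerivₗ (hS : JensenGapBound L g) (hL : 0 ≤ L) (x : E) :
    E →ₗ[ℝ] F where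
  toFun := rightLineDeriv g x
  map_add' := hS.rightLineDeriv_add hL x
  map_smul' := hS.rightLineDeriv_smul hL x

theorem norm_sub_sub_rightLineDerivₗ_le (hS : JensenGapBound L g) (hL : 0 ≤ L) (x v : E) :
    ‖g (x + v) - g x - hS.rightLineDerivₗ hL x v‖ ≤ L / 2 * ‖v‖ ^ 2 := by
  simpa [rightLineDerivₗ] using hS.norm_slope_sub_rightLineDeriv_le hL x v one_pos

theorem norm_rightLineDerivₗ_add_sub_le_of_pos (hS : JensenGapBound L g) (hL : 0 ≤ L)
    (z h k : E) {s : ℝ} (hs : 0 < s) :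
    ‖hS.rightLineDerivₗ hL (z + h) k - hS.rightLineDerivₗ hL z k‖ ≤
      L / 2 * (‖h‖ ^ 2 / s + s * ‖k‖ ^ 2) := by
  set D := hS.rightLineDerivₗ hL
  -- Step `τ = s / n`: the telescoped four-point bound costs `L / 2 (‖h‖² / s + s ‖k‖²)` after
  -- dividing by `τ`, while the two Taylor errors cost only `L τ ‖k‖²`, which vanishes as `n → ∞`.
  have hn : ∀ n : ℕ, 0 < n →
      ‖D (z + h) k - D z k‖ ≤ L / 2 * (‖h‖ ^ 2 / s + s * ‖k‖ ^ 2) + L * s * ‖k‖ ^ 2 / n := by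
    intro n hn
    have hn' : (0 : ℝ) < n := Nat.cast_pos.2 hn
    set τ := s / n
    have hτ : 0 < τ := by positivity
    have hsplit : τ • (D (z + h) k - D z k) =
        (g (z + h + τ • k) - g (z + h) - (g (z + τ • k) - g z)) -
          (g (z + h + τ • k) - g (z + h) - D (z + h) (τ • k)) +
          (g (z + τ • k) - g z - D z (τ • k)) := by
      rw [map_smul, map_smul, smul_sub]; abel
    have hbound := norm_add_le_of_le (norm_sub_le_of_le
      (hS.norm_sub_sub_sub_le_of_nat z h (τ • k) hn)
      (hS.norm_sub_sub_rightLineDerivₗ_le hL (z + h) (τ • k)))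
      (hS.norm_sub_sub_rightLineDerivₗ_le hL z (τ • k))
    rw [← hsplit, norm_smul, norm_smul, Real.norm_of_nonneg hτ.le] at hbound
    refine le_of_mul_le_mul_left (hbound.trans_eq ?_) hτ
    simp only [τ]
    field_simp
    ring
  refine ge_of_tendsto ?_ (eventually_atTop.2 ⟨1, fun n hn' => hn n hn'⟩)
  simpa using tendsto_const_nhds.add (tendsto_const_div_atTop_nhds_zero_nat (L * s * ‖k‖ ^ 2))

theorem norm_rightLineDerivₗ_add_sub_le (hS : JensenGapBound L g) (hL : 0 ≤ L) (z h k : E) :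
    ‖hS.rightLineDerivₗ hL (z + h) k - hS.rightLineDerivₗ hL z k‖ ≤ L * ‖h‖ * ‖k‖ := by
  rcases eq_or_ne h 0 with rfl | hh
  · simp
  rcases eq_or_ne k 0 with rfl | hk
  · simp
  have hh' := norm_pos_iff.2 hh
  have hk' := norm_pos_iff.2 hk
  refine (hS.norm_rightLineDerivₗ_add_sub_le_of_pos hL z h k (div_pos hh' hk')).trans_eq ?_
  field_simp
  ring

theorem isLittleO_sub_sub_rightLineDerivₗ (hS : JensenGapBound L g) (hL : 0 ≤ L) (x : E) :
    (fun v => g (x + v) - g x - hS.rightLineDerivₗ hL x v) =o[𝓝 0] fun v => v :=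
  (IsBigO.of_bound (L / 2) (Eventually.of_forall fun v => by
    simpa using hS.norm_sub_sub_rightLineDerivₗ_le hL x v)).trans_isLittleO
    (isLittleO_norm_pow_id one_lt_two)

theorem hasFDerivAt (hS : JensenGapBound L g) (hL : 0 ≤ L) (x : E)
    (hc : Continuous (hS.rightLineDerivₗ hL x)) :
    HasFDerivAt g ⟨hS.rightLineDerivₗ hL x, hc⟩ x :=
  hasFDerivAt_iff_isLittleO_nhds_zero.2 (hS.isLittleO_sub_sub_rightLineDerivₗ hL x)

end JensenGapBound

end InnerProductSpace

theorem LinearMap.isSymmetric_of_isLittleO_of_hasGradientAt {X : Type*} [NormedAddCommGroup X]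
    [InnerProductSpace ℝ X] [CompleteSpace X] {f : X → ℝ} {g : X → X}
    (hg : ∀ y, HasGradientAt f (g y) y) {x : X} {A : X →ₗ[ℝ] X}
    (hA : (fun v => g (x + v) - g x - A v) =o[𝓝 0] fun v => v) : A.IsSymmetric := by
  intro u v
  -- On the plane spanned by `u` and `v` the linear map `A` is automatically continuous.
  set Φ : ℝ × ℝ →L[ℝ] X :=
    (ContinuousLinearMap.fst ℝ ℝ ℝ).smulRight u + (ContinuousLinearMap.snd ℝ ℝ ℝ).smulRight v
  set B : ℝ × ℝ →L[ℝ] X := (A ∘ₗ (Φ : ℝ × ℝ →ₗ[ℝ] X)).toContinuousLinearMap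
  set K : X →L[ℝ] ℝ × ℝ →L[ℝ] ℝ :=
    ((ContinuousLinearMap.compL ℝ (ℝ × ℝ) X ℝ).flip Φ).comp (innerSL ℝ)
  have hf : ∀ q, HasFDerivAt (fun q => f (x + Φ q)) (K (g (x + Φ q))) q := by
    intro q
    refine ((hg (x + Φ q)).hasFDerivAt.comp q (Φ.hasFDerivAt.const_add x)).congr_fderiv ?_
    ext <;> simp [K]
  have hG : HasFDerivAt (fun q => g (x + Φ q)) B 0 := by
    rw [hasFDerivAt_iff_isLittleO_nhds_zero]
    have := (hA.comp_tendsto (Φ.continuous.tendsto' 0 0 (map_zero Φ))).trans_isBigO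
      (Φ.isBigO_id (𝓝 0))
    simpa [B, Function.comp_def] using this
  have := second_derivative_symmetric hf (K.hasFDerivAt.comp 0 hG) (1, 0) (0, 1)
  simpa [K, B, Φ, real_inner_comm] using this

/-- If `f : X → ℝ` (with `X` a real Hilbert space) is Fréchet differentiable and its gradient
satisfies the Jensen-type inequality, then `f` is twice differentiable (its gradient map is
Fréchet differentiable) and the Hessian is `L`-Lipschitz in the operator norm. -/
theorem twice_differentiable_of_gradient_jensen_inequality
    {X : Type*} [NormedAddCommGroup X] [InnerProductSpace ℝ X] [CompleteSpace X]
    (L : ℝ) (hL : 0 < L) (f : X → ℝ) (hf : Differentiable ℝ f)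
    (hineq : ∀ (n : ℕ) (x : Fin n → X) (lam : Fin n → ℝ), (∀ i, 0 ≤ lam i) → ∑ i, lam i = 1 →
      ‖gradient f (∑ i, lam i • x i) - ∑ i, lam i • gradient f (x i)‖ ≤
        L / 2 * ∑ i, ∑ j, if i < j then lam i * lam j * ‖x i - x j‖ ^ 2 else 0) :
    Differentiable ℝ (gradient f) ∧
      ∀ x y : X, ‖fderiv ℝ (gradient f) x - fderiv ℝ (gradient f) y‖ ≤ L * ‖x - y‖ := by
  have hS : JensenGapBound L (gradient f) := .of_forall_fin hineq
  have hsymm : ∀ x, (hS.rightLineDerivₗ hL.le x).IsSymmetric := fun x =>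
    LinearMap.isSymmetric_of_isLittleO_of_hasGradientAt (fun y => (hf y).hasGradientAt)
      (hS.isLittleO_sub_sub_rightLineDerivₗ hL.le x)
  have hderiv : ∀ x, HasFDerivAt (gradient f)
      ⟨hS.rightLineDerivₗ hL.le x, (hsymm x).continuous⟩ x := fun x =>
    hS.hasFDerivAt hL.le x (hsymm x).continuous
  refine ⟨fun x => (hderiv x).differentiableAt, fun x y => ?_⟩
  rw [(hderiv x).fderiv, (hderiv y).fderiv]
  refine ContinuousLinearMap.opNorm_le_bound _ (by positivity) fun k => ?_
  simpa using hS.norm_rightLineDerivₗ_add_sub_le hL.le y (x - y) k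
end

section
/- Let X be a real Hilbert space, β > 0, and let g : X → ℝ ∪ {+∞} be a proper, convex, lower semicontinuous function. Then the following are equivalent: (i) g takes only real values, g is Fréchet differentiable on X, and its gradient ∇g : X → X is (1/β)-cocoercive, i.e., ⟨∇g(x) − ∇g(y), x − y⟩ ≥ (1/β)‖∇g(x) − ∇g(y)‖² for all x, y ∈ X; (ii) the function x ↦ (β/2)‖x‖² − g(x) is convex. -/
/-!
Write `f` for `g` read as a real function. The pivot of the argument is the two-sided bound
`⟪∇f x, v⟫ ≤ f (x + v) - f x ≤ ⟪∇f x, v⟫ + β/2 ‖v‖²` for all `x, v`.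

(i) ⇒ (ii): cocoercivity bounds `⟪∇f x - ∇f y, x - y⟫` by `β ‖x - y‖²`, so the gradient
`β x - ∇f x` of `β/2 ‖·‖² - f` is monotone and that function is convex.

(ii) ⇒ (i): the convexity inequality at `t = 1/2` propagates finiteness of `g` from one point to
all of `X`. Then `f` is convex and lower semicontinuous on a Banach space, hence continuous
(Baire), so `f` and `β/2 ‖·‖² - f` have Hahn–Banach subgradients at every point; together they
give the two-sided bound, hence Fréchet differentiability. Comparing the lower bound at `p` with the
upper bound at `q`, at the point minimising the latter, gives
`f p + ⟪∇f p, q - p⟫ + ‖∇f q - ∇f p‖² / (2β) ≤ f q`; adding this to its mirror image gives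
cocoercivity.
-/

open RealInnerProductSpace

open Set Filter Topology

section Module

variable {E : Type*} [AddCommGroup E] [Module ℝ E] {f : E → ℝ}

theorem convexOn_univ_iff_one_sub_smul_add_smul :
    ConvexOn ℝ univ f ↔ ∀ x y : E, ∀ t : ℝ, 0 ≤ t → t ≤ 1 →
      f ((1 - t) • x + t • y) ≤ (1 - t) * f x + t * f y := by
  refine ⟨fun hf x y t ht₀ ht₁ => hf.2 trivial trivial (sub_nonneg.2 ht₁) ht₀ (sub_add_cancel 1 t),
    fun h => ⟨convex_univ, fun x _ y _ a b ha hb hab => ?_⟩⟩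
  obtain rfl : a = 1 - b := eq_sub_of_add_eq hab
  exact h x y b hb (by linarith)

end Module

section NormedSpace

variable {E : Type*} [NormedAddCommGroup E] [NormedSpace ℝ E] {f : E → ℝ}

theorem ConvexOn.continuous_of_lowerSemicontinuous [CompleteSpace E] (hf : ConvexOn ℝ univ f)
    (hlsc : LowerSemicontinuous f) : Continuous f := by
  -- Baire: some sublevel set `{f ≤ n}` has interior, and a convex function that is bounded above
  -- near one point is continuous.
  obtain ⟨n, x₀, hx₀⟩ := nonempty_interior_of_iUnion_of_closed
    (fun n : ℕ => hlsc.isClosed_preimage n) (iUnion_eq_univ_iff.2 fun x => exists_nat_ge (f x))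
  rw [← continuousOn_univ]
  have hbdd_iff_cont := (hf.continuousOn_tfae isOpen_univ univ_nonempty).out 3 1
  refine hbdd_iff_cont.1 ⟨x₀, mem_univ _, isBoundedUnder_of_eventually_le (a := (n : ℝ)) ?_⟩
  exact eventually_of_mem (isOpen_interior.mem_nhds hx₀) fun _ hz =>
    mem_Iic.1 (mem_preimage.1 (interior_subset hz))

theorem ConvexOn.exists_le_add_of_continuous (hf : ConvexOn ℝ univ f) (hc : Continuous f)
    (x : E) : ∃ L : E →L[ℝ] ℝ, ∀ v, f x + L v ≤ f (x + v) := by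
  have hopen : IsOpen {p : E × ℝ | f p.1 < p.2} := isOpen_lt (hc.comp continuous_fst) continuous_snd
  have hconv : Convex ℝ {p : E × ℝ | f p.1 < p.2} := by simpa using hf.convex_strict_epigraph
  obtain ⟨ℓ, hℓ⟩ := geometric_hahn_banach_open_point hconv hopen (x := (x, f x)) (lt_irrefl (f x))
  have hsep : ∀ v r, f (x + v) < r → ℓ (v, 0) + (r - f x) * ℓ (0, 1) < 0 := by
    intro v r hr
    have h := hℓ (x + v, r) hr
    have hdecomp : (x + v, r) = (x, f x) + (v, 0) + (r - f x) • ((0 : E), (1 : ℝ)) := by simp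
    rw [hdecomp, map_add, map_add, map_smul, smul_eq_mul] at h
    linarith
  have hc : ℓ (0, 1) < 0 := by
    simpa [Prod.mk_zero_zero] using hsep 0 (f x + 1) (by simp)
  refine ⟨(-ℓ (0, 1))⁻¹ • ℓ.comp (.inl ℝ E ℝ), fun v => le_of_forall_gt_imp_ge_of_dense
    fun r hr => ?_⟩
  have hvr := hsep v r hr
  change f x + (-ℓ (0, 1))⁻¹ * ℓ (v, 0) ≤ r
  rw [← le_sub_iff_add_le', inv_mul_le_iff₀ (by linarith)]
  nlinarith

theorem ContinuousLinearMap.eq_zero_of_le_mul_norm_sq {ℓ : E →L[ℝ] ℝ} {C : ℝ}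
    (h : ∀ v, ℓ v ≤ C * ‖v‖ ^ 2) : ℓ = 0 := by
  have hle : ∀ v, ℓ v ≤ 0 := by
    intro v
    have hlim : Tendsto (fun t : ℝ => C * t * ‖v‖ ^ 2) (𝓝[>] 0) (𝓝 0) := by
      refine tendsto_nhdsWithin_of_tendsto_nhds ?_
      simpa using ((tendsto_id (x := 𝓝 (0 : ℝ))).const_mul C).mul_const (‖v‖ ^ 2)
    refine ge_of_tendsto hlim (eventually_nhdsWithin_of_forall fun t (ht : 0 < t) => ?_)
    have := h (t • v)
    rw [map_smul, smul_eq_mul, norm_smul, Real.norm_of_nonneg ht.le] at this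
    nlinarith
  ext v
  exact le_antisymm (hle v) (by simpa using hle (-v))

end NormedSpace

theorem hasFDerivAt_of_norm_sub_le_mul_norm_sq {𝕜 E F : Type*} [NontriviallyNormedField 𝕜]
    [NormedAddCommGroup E] [NormedSpace 𝕜 E] [NormedAddCommGroup F] [NormedSpace 𝕜 F]
    {f : E → F} {L : E →L[𝕜] F} {x : E} {C : ℝ}
    (h : ∀ v, ‖f (x + v) - f x - L v‖ ≤ C * ‖v‖ ^ 2) : HasFDerivAt f L x :=
  hasFDerivAt_iff_isLittleO_nhds_zero.2 <|
    (Asymptotics.IsBigO.of_bound C (Eventually.of_forall fun v => by simpa using h v))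
      |>.trans_isLittleO (Asymptotics.isLittleO_norm_pow_id one_lt_two)

section InnerProductSpace

variable {X : Type*} [NormedAddCommGroup X] [InnerProductSpace ℝ X] {β : ℝ}

theorem real_inner_le_mul_norm_sq_of_cocoercive (hβ : 0 < β) {w d : X}
    (h : 1 / β * ‖w‖ ^ 2 ≤ ⟪w, d⟫) : ⟪w, d⟫ ≤ β * ‖d‖ ^ 2 := by
  have hw : ‖w‖ ^ 2 ≤ β * ⟪w, d⟫ := by
    rwa [div_mul_eq_mul_div, one_mul, div_le_iff₀' hβ] at h
  have hexp := norm_sub_sq_real w (β • d)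
  rw [real_inner_smul_right, norm_smul, Real.norm_of_nonneg hβ.le] at hexp
  nlinarith [sq_nonneg ‖w - β • d‖]

theorem add_inner_add_norm_sub_sq_div_le (hβ : 0 < β) {f : X → ℝ} {G : X → X}
    (h₁ : ∀ x v, f x + ⟪G x, v⟫ ≤ f (x + v))
    (h₂ : ∀ x v, f (x + v) ≤ f x + ⟪G x, v⟫ + β / 2 * ‖v‖ ^ 2) (p q : X) :
    f p + ⟪G p, q - p⟫ + ‖G q - G p‖ ^ 2 / (2 * β) ≤ f q := by
  set d := G q - G p
  -- `w` minimises `⟪d, w⟫ + β/2 ‖w‖²`.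
  set w := -(1 / β) • d
  have hlow := h₁ p (q + w - p)
  rw [add_sub_cancel, add_sub_right_comm, inner_add_right] at hlow
  have hup := h₂ q w
  have hstep : ⟪G q, w⟫ - ⟪G p, w⟫ + β / 2 * ‖w‖ ^ 2 = -(‖d‖ ^ 2 / (2 * β)) := by
    rw [← inner_sub_left, real_inner_smul_right, real_inner_self_eq_norm_sq, norm_smul, mul_pow,
      Real.norm_eq_abs, sq_abs]
    field_simp
    ring
  linarith

theorem cocoercive_of_le_add_inner_le (hβ : 0 < β) {f : X → ℝ} {G : X → X}
    (h₁ : ∀ x v, f x + ⟪G x, v⟫ ≤ f (x + v))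
    (h₂ : ∀ x v, f (x + v) ≤ f x + ⟪G x, v⟫ + β / 2 * ‖v‖ ^ 2) (x y : X) :
    1 / β * ‖G x - G y‖ ^ 2 ≤ ⟪G x - G y, x - y⟫ := by
  have hxy := add_inner_add_norm_sub_sq_div_le hβ h₁ h₂ x y
  have hyx := add_inner_add_norm_sub_sq_div_le hβ h₁ h₂ y x
  rw [norm_sub_rev] at hxy
  have : ⟪G x - G y, x - y⟫ = -⟪G x, y - x⟫ - ⟪G y, x - y⟫ := by
    rw [inner_sub_left, ← neg_sub y x, inner_neg_right]
  rw [this]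
  have : 1 / β * ‖G x - G y‖ ^ 2 = ‖G x - G y‖ ^ 2 / (2 * β) + ‖G x - G y‖ ^ 2 / (2 * β) := by
    field_simp
    ring
  linarith

end InnerProductSpace

section Hilbert

variable {X : Type*} [NormedAddCommGroup X] [InnerProductSpace ℝ X] [CompleteSpace X] {β : ℝ}
  {f : X → ℝ}

theorem convexOn_univ_of_hasGradientAt_of_monotone {h : X → ℝ} {H : X → X}
    (hH : ∀ x, HasGradientAt h (H x) x) (hmono : ∀ x y, 0 ≤ ⟪H x - H y, x - y⟫) :
    ConvexOn ℝ univ h := by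
  refine convexOn_univ_iff_one_sub_smul_add_smul.2 fun x y t ht₀ ht₁ => ?_
  set c : ℝ → X := ⇑(AffineMap.lineMap (k := ℝ) x y)
  have hderiv : ∀ s, HasDerivAt (h ∘ c) ⟪H (c s), y - x⟫ s := fun s =>
    (hasGradientAt_iff_hasFDerivAt.1 (hH (c s))).comp_hasDerivAt s AffineMap.hasDerivAt_lineMap
  have hderiv_mono : Monotone fun s => ⟪H (c s), y - x⟫ := by
    intro s s' hss'
    rcases hss'.eq_or_lt with rfl | hlt
    · rfl
    have := hmono (c s') (c s)
    have hcc : c s' - c s = (s' - s) • (y - x) := by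
      simp only [c, AffineMap.lineMap_apply_module']
      module
    rw [hcc, real_inner_smul_right, inner_sub_left] at this
    nlinarith
  have hconv : ConvexOn ℝ univ (h ∘ c) := by
    refine Monotone.convexOn_univ_of_deriv (fun s => (hderiv s).differentiableAt) ?_
    rwa [show deriv (h ∘ c) = _ from funext fun s => (hderiv s).deriv]
  simpa [c, AffineMap.lineMap_apply_module] using
    convexOn_univ_iff_one_sub_smul_add_smul.1 hconv 0 1 t ht₀ ht₁

theorem hasGradientAt_half_mul_norm_sq_sub (hf : Differentiable ℝ f) (x : X) :
    HasGradientAt (fun z => β / 2 * ‖z‖ ^ 2 - f z) (β • x - gradient f x) x := by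
  have hnorm : HasFDerivAt (fun z : X => β / 2 * ‖z‖ ^ 2)
      (InnerProductSpace.toDual ℝ X (β • x)) x := by
    refine ((hasStrictFDerivAt_norm_sq x).hasFDerivAt.const_mul (β / 2)).congr_fderiv ?_
    ext v
    simp only [smul_apply, coe_innerSL_apply, nsmul_eq_mul, Nat.cast_ofNat, smul_eq_mul, map_smul,
      InnerProductSpace.toDual_apply_apply]
    ring
  rw [hasGradientAt_iff_hasFDerivAt, map_sub]
  exact hnorm.sub (hasGradientAt_iff_hasFDerivAt.1 (hf x).hasGradientAt)

theorem convexOn_half_mul_norm_sq_sub_of_cocoercive (hβ : 0 < β) (hf : Differentiable ℝ f)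
    (hco : ∀ x y, 1 / β * ‖gradient f x - gradient f y‖ ^ 2 ≤
      ⟪gradient f x - gradient f y, x - y⟫) :
    ConvexOn ℝ univ fun z => β / 2 * ‖z‖ ^ 2 - f z := by
  refine convexOn_univ_of_hasGradientAt_of_monotone (hasGradientAt_half_mul_norm_sq_sub hf)
    fun x y => ?_
  have := real_inner_le_mul_norm_sq_of_cocoercive hβ (hco x y)
  have hsplit : ⟪(β • x - gradient f x) - (β • y - gradient f y), x - y⟫ =
      β * ‖x - y‖ ^ 2 - ⟪gradient f x - gradient f y, x - y⟫ := by
    rw [sub_sub_sub_comm, ← smul_sub, inner_sub_left, real_inner_smul_left,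
      real_inner_self_eq_norm_sq]
  linarith

theorem exists_le_add_inner_le_of_convexOn (hf : ConvexOn ℝ univ f) (hc : Continuous f)
    (hh : ConvexOn ℝ univ fun z => β / 2 * ‖z‖ ^ 2 - f z) (x : X) :
    ∃ G : X, (∀ v, f x + ⟪G, v⟫ ≤ f (x + v)) ∧
      ∀ v, f (x + v) ≤ f x + ⟪G, v⟫ + β / 2 * ‖v‖ ^ 2 := by
  obtain ⟨L, hL⟩ := hf.exists_le_add_of_continuous hc x
  obtain ⟨M, hM⟩ := hh.exists_le_add_of_continuous (by fun_prop) x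
  set G := β • x - (InnerProductSpace.toDual ℝ X).symm M
  have hG : ∀ v, ⟪G, v⟫ = β * ⟪x, v⟫ - M v := fun v => by
    rw [inner_sub_left, real_inner_smul_left, InnerProductSpace.toDual_symm_apply]
  have hupper : ∀ v, f (x + v) ≤ f x + ⟪G, v⟫ + β / 2 * ‖v‖ ^ 2 := fun v => by
    have := hM v
    rw [norm_add_sq_real] at this
    rw [hG]
    linarith
  have hLG : L = InnerProductSpace.toDual ℝ X G :=
    sub_eq_zero.1 <| ContinuousLinearMap.eq_zero_of_le_mul_norm_sq (C := β / 2) fun v => by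
      simp only [sub_apply, InnerProductSpace.toDual_apply_apply]
      linarith [hL v, hupper v]
  exact ⟨G, fun v => by simpa [hLG] using hL v, hupper⟩

theorem hasGradientAt_of_le_add_inner_le {x G : X}
    (h₁ : ∀ v, f x + ⟪G, v⟫ ≤ f (x + v))
    (h₂ : ∀ v, f (x + v) ≤ f x + ⟪G, v⟫ + β / 2 * ‖v‖ ^ 2) : HasGradientAt f G x := by
  refine hasGradientAt_iff_hasFDerivAt.2 <| hasFDerivAt_of_norm_sub_le_mul_norm_sq (C := β / 2)
    fun v => ?_
  rw [Real.norm_eq_abs, abs_le, InnerProductSpace.toDual_apply_apply]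
  constructor <;> linarith [h₁ v, h₂ v, sq_nonneg ‖v‖]

theorem differentiable_and_cocoercive_of_convexOn (hβ : 0 < β) (hf : ConvexOn ℝ univ f)
    (hc : Continuous f) (hh : ConvexOn ℝ univ fun z => β / 2 * ‖z‖ ^ 2 - f z) :
    Differentiable ℝ f ∧ ∀ x y, 1 / β * ‖gradient f x - gradient f y‖ ^ 2 ≤
      ⟪gradient f x - gradient f y, x - y⟫ := by
  choose G hG₁ hG₂ using exists_le_add_inner_le_of_convexOn hf hc hh
  have hG : ∀ x, HasGradientAt f (G x) x := fun x =>
    hasGradientAt_of_le_add_inner_le (hG₁ x) (hG₂ x)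
  rw [gradient_eq hG]
  exact ⟨fun x => (hG x).differentiableAt, cocoercive_of_le_add_inner_le hβ hG₁ hG₂⟩

end Hilbert

section EReal

variable {E : Type*} [AddCommGroup E] [Module ℝ E] {g : E → EReal} {f : E → ℝ}

theorem convexOn_univ_iff_of_coe (hg : ∀ x, g x = f x) :
    (∀ x y : E, ∀ t : ℝ, 0 ≤ t → t ≤ 1 →
      g ((1 - t) • x + t • y) ≤ ((1 - t : ℝ) : EReal) * g x + ((t : ℝ) : EReal) * g y) ↔
    ConvexOn ℝ univ f := by
  simp only [hg, ← EReal.coe_mul, ← EReal.coe_add, EReal.coe_le_coe_iff]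
  rw [convexOn_univ_iff_one_sub_smul_add_smul]

theorem convexOn_univ_sub_iff_of_coe (q : E → ℝ) (hg : ∀ x, g x = f x) :
    (∀ x y : E, ∀ t : ℝ, 0 ≤ t → t ≤ 1 →
      ((q ((1 - t) • x + t • y) : ℝ) : EReal) + ((1 - t : ℝ) : EReal) * g x
          + ((t : ℝ) : EReal) * g y ≤
        g ((1 - t) • x + t • y) + (((1 - t) * q x + t * q y : ℝ) : EReal)) ↔
    ConvexOn ℝ univ fun z => q z - f z := by
  simp only [hg, ← EReal.coe_mul, ← EReal.coe_add, EReal.coe_le_coe_iff]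
  rw [convexOn_univ_iff_one_sub_smul_add_smul]
  exact forall₅_congr fun x y t _ _ => ⟨fun h => by linarith, fun h => by linarith⟩

theorem ne_top_of_forall_coe_add_le (q : E → ℝ) (hbot : ∀ x, g x ≠ ⊥) (hproper : ∃ x, g x ≠ ⊤)
    (hq : ∀ x y : E, ∀ t : ℝ, 0 ≤ t → t ≤ 1 →
      ((q ((1 - t) • x + t • y) : ℝ) : EReal) + ((1 - t : ℝ) : EReal) * g x
          + ((t : ℝ) : EReal) * g y ≤
        g ((1 - t) • x + t • y) + (((1 - t) * q x + t * q y : ℝ) : EReal))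
    (x : E) : g x ≠ ⊤ := by
  obtain ⟨y₀, hy₀⟩ := hproper
  intro hx
  -- `y₀` is the midpoint of `x` and `2 y₀ - x`.
  set y := (2 : ℝ) • y₀ - x
  have hmid : (1 - 2⁻¹ : ℝ) • x + (2⁻¹ : ℝ) • y = y₀ := by module
  have hy : ((2⁻¹ : ℝ) : EReal) * g y ≠ ⊥ :=
    (EReal.mul_ne_bot _ _).2 ⟨.inl (EReal.coe_ne_bot _), .inr (hbot y), .inl (EReal.coe_ne_top _),
      .inl (by norm_num)⟩
  have h := hq x y 2⁻¹ (by norm_num) (by norm_num)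
  rw [hmid, hx, EReal.coe_mul_top_of_pos (by norm_num), EReal.coe_add_top,
    EReal.top_add_of_ne_bot hy, top_le_iff] at h
  exact (EReal.add_lt_top hy₀ (EReal.coe_ne_top _)).ne h

end EReal

theorem LowerSemicontinuous.of_coe {E : Type*} [TopologicalSpace E] {g : E → EReal} {f : E → ℝ}
    (hg : ∀ x, g x = f x) (hlsc : LowerSemicontinuous g) : LowerSemicontinuous f := fun x c hc => by
  simpa [hg] using hlsc x c (by simpa [hg] using hc)

/-- `g : X → ℝ ∪ {+∞}` is modelled as `X → EReal` never taking the value `⊥`, and convexity of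
`(β/2)‖·‖² - g` is stated in the subtraction-free form
`(β/2)‖(1-t)x+ty‖² + (1-t)·g(x) + t·g(y) ≤ g((1-t)x+ty) + (1-t)·(β/2)‖x‖² + t·(β/2)‖y‖²`. -/
theorem baillon_haddad_piece
    {X : Type*} [NormedAddCommGroup X] [InnerProductSpace ℝ X] [CompleteSpace X]
    (β : ℝ) (hβ : 0 < β) (g : X → EReal)
    (hbot : ∀ x, g x ≠ ⊥)
    (hproper : ∃ x, g x ≠ ⊤)
    (hconv : ∀ x y : X, ∀ t : ℝ, 0 ≤ t → t ≤ 1 →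
      g ((1 - t) • x + t • y) ≤ ((1 - t : ℝ) : EReal) * g x + ((t : ℝ) : EReal) * g y)
    (hlsc : LowerSemicontinuous g) :
    ((∀ x, g x ≠ ⊤) ∧
      Differentiable ℝ (fun x => (g x).toReal) ∧
      ∀ x y : X,
        (1 / β) * ‖gradient (fun z => (g z).toReal) x - gradient (fun z => (g z).toReal) y‖ ^ 2 ≤
          ⟪gradient (fun z => (g z).toReal) x - gradient (fun z => (g z).toReal) y, x - y⟫) ↔
    (∀ x y : X, ∀ t : ℝ, 0 ≤ t → t ≤ 1 →
      ((β / 2 * ‖(1 - t) • x + t • y‖ ^ 2 : ℝ) : EReal)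
          + ((1 - t : ℝ) : EReal) * g x + ((t : ℝ) : EReal) * g y ≤
        g ((1 - t) • x + t • y)
          + (((1 - t) * (β / 2 * ‖x‖ ^ 2) + t * (β / 2 * ‖y‖ ^ 2) : ℝ) : EReal)) := by
  have hcoe (hfin : ∀ x, g x ≠ ⊤) (x : X) : g x = (g x).toReal :=
    (EReal.coe_toReal (hfin x) (hbot x)).symm
  constructor
  · rintro ⟨hfin, hdiff, hco⟩
    exact (convexOn_univ_sub_iff_of_coe (fun z => β / 2 * ‖z‖ ^ 2) (hcoe hfin)).2
      (convexOn_half_mul_norm_sq_sub_of_cocoercive hβ hdiff hco)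
  · intro hq
    have hfin := ne_top_of_forall_coe_add_le (fun z => β / 2 * ‖z‖ ^ 2) hbot hproper hq
    have hf := (convexOn_univ_iff_of_coe (hcoe hfin)).1 hconv
    have hc := hf.continuous_of_lowerSemicontinuous (hlsc.of_coe (hcoe hfin))
    have hh := (convexOn_univ_sub_iff_of_coe (fun z => β / 2 * ‖z‖ ^ 2) (hcoe hfin)).1 hq
    exact ⟨hfin, differentiable_and_cocoercive_of_convexOn hβ hf hc hh⟩
end

section
/- Let X and Y be real Banach spaces with Y reflexive (the canonical embedding of Y into its double dual Y** is surjective), let F : X → Y be continuous, and let L > 0. Suppose that for every continuous linear functional y* ∈ Y* with ‖y*‖ ≤ 1, the slice φ_{y*} : X → ℝ defined by φ_{y*}(x) = y*(F(x)) is Fréchet differentiable and its derivative φ′_{y*} : X → X* is L-Lipschitz continuous. Then F is Fréchet differentiable on X and its derivative F′ : X → B(X,Y) is L-Lipschitz continuous in the operator norm. -/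
/-!
For fixed `x` and `h`, the map `y' ↦ D(y' ∘ F)(x) h` is linear in `y'`, and the second-order
Taylor bound `|y'(F(x + h)) - y'(F x) - D(y' ∘ F)(x) h| ≤ L ‖y'‖ ‖h‖²`, combined with continuity
of `F` at `x`, makes it bounded. By reflexivity it is therefore evaluation at a point `A x h` of `Y`,
with `A x : X →L[ℝ] Y`. Dualizing the Taylor bound gives `‖F(x + h) - F x - A x h‖ ≤ L ‖h‖²`, so
`F' = A`, and `‖A a - A b‖` is at most the norm of `y' ↦ D(y' ∘ F)(a) - D(y' ∘ F)(b)`, which is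
at most `L ‖a - b‖`.
-/

open Metric Asymptotics

theorem exists_norm_le_one_eq_norm_smul {E : Type*} [NormedAddCommGroup E] [NormedSpace ℝ E]
    (y : E) : ∃ u : E, ‖u‖ ≤ 1 ∧ y = ‖y‖ • u := by
  rcases eq_or_ne y 0 with rfl | hy
  · exact ⟨0, by simp, by simp⟩
  · exact ⟨‖y‖⁻¹ • y, (norm_smul_inv_norm hy).le,
      (smul_inv_smul₀ (norm_ne_zero_iff.mpr hy) y).symm⟩

section Taylor

variable {E G : Type*} [NormedAddCommGroup E] [NormedSpace ℝ E]
  [NormedAddCommGroup G] [NormedSpace ℝ G] {f : E → G} {K : ℝ}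

theorem norm_image_add_sub_sub_fderiv_le (hf : Differentiable ℝ f) (hK : 0 ≤ K)
    (hf' : ∀ a b, ‖fderiv ℝ f a - fderiv ℝ f b‖ ≤ K * ‖a - b‖) (x h : E) :
    ‖f (x + h) - f x - fderiv ℝ f x h‖ ≤ K * ‖h‖ ^ 2 := by
  have hbound : ∀ z ∈ closedBall x ‖h‖, ‖fderiv ℝ f z - fderiv ℝ f x‖ ≤ K * ‖h‖ := fun z hz =>
    (hf' z x).trans (mul_le_mul_of_nonneg_left (mem_closedBall_iff_norm.mp hz) hK)
  have hxh : x + h ∈ closedBall x ‖h‖ := by simp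
  have := (convex_closedBall x ‖h‖).norm_image_sub_le_of_norm_fderiv_le' (fun z _ => hf z) hbound
    (mem_closedBall_self (norm_nonneg h)) hxh
  simpa [sq, mul_assoc] using this

theorem hasFDerivAt_of_norm_sub_le_sq {A : E →L[ℝ] G} {x : E}
    (hA : ∀ h, ‖f (x + h) - f x - A h‖ ≤ K * ‖h‖ ^ 2) : HasFDerivAt f A x := by
  rw [hasFDerivAt_iff_isLittleO_nhds_zero]
  refine (IsBigO.of_bound K (Filter.Eventually.of_forall fun h => ?_)).trans_isLittleO
    (isLittleO_norm_pow_id one_lt_two)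
  simpa using hA h

theorem StrongDual.norm_le_of_norm_image_sub_le {f : E → ℝ} {φ : StrongDual ℝ E} {x : E}
    {M ε : ℝ} (hε : 0 < ε) (hK : 0 ≤ K)
    (hφ : ∀ h, ‖f (x + h) - f x - φ h‖ ≤ K * ‖h‖ ^ 2)
    (hM : ∀ h ∈ closedBall 0 ε, ‖f (x + h) - f x‖ ≤ M) : ‖φ‖ ≤ (M + K * ε ^ 2) / ε := by
  refine ContinuousLinearMap.opNorm_bound_of_ball_bound hε _ φ fun h hh => ?_
  calc ‖φ h‖ ≤ ‖f (x + h) - f x‖ + ‖f (x + h) - f x - φ h‖ := norm_le_insert _ _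
    _ ≤ M + K * ε ^ 2 := add_le_add (hM h hh) <|
        (hφ h).trans (by gcongr; exact mem_closedBall_zero_iff.mp hh)

end Taylor

section Reflexive

variable {X Y : Type*} [NormedAddCommGroup X] [NormedSpace ℝ X]
  [NormedAddCommGroup Y] [NormedSpace ℝ Y]

theorem exists_dual_apply_eq_of_surjective_inclusionInDoubleDual
    (hrefl : Function.Surjective (NormedSpace.inclusionInDoubleDual ℝ Y))
    (Φ : StrongDual ℝ Y →L[ℝ] StrongDual ℝ X) :
    ∃ A : X →L[ℝ] Y, ∀ y' h, y' (A h) = Φ y' h := by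
  let e := LinearIsometryEquiv.ofSurjective (NormedSpace.inclusionInDoubleDualLi ℝ) hrefl
  refine ⟨e.symm.toContinuousLinearEquiv.toContinuousLinearMap.comp Φ.flip, fun y' h => ?_⟩
  exact congrArg (· y') (e.apply_symm_apply (Φ.flip h))

theorem opNorm_le_of_dual_apply_eq {A : X →L[ℝ] Y} {Φ : StrongDual ℝ Y →L[ℝ] StrongDual ℝ X}
    (hA : ∀ y' h, y' (A h) = Φ y' h) : ‖A‖ ≤ ‖Φ‖ := by
  refine A.opNorm_le_bound (norm_nonneg Φ) fun h => ?_
  refine NormedSpace.norm_le_dual_bound ℝ _ (by positivity) fun y' => ?_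
  rw [hA]
  calc ‖Φ y' h‖ ≤ ‖Φ y'‖ * ‖h‖ := (Φ y').le_opNorm h
    _ ≤ ‖Φ‖ * ‖y'‖ * ‖h‖ := by gcongr; exact Φ.le_opNorm y'
    _ = ‖Φ‖ * ‖h‖ * ‖y'‖ := by ring

end Reflexive

section Slices

variable {X Y : Type*} [NormedAddCommGroup X] [NormedSpace ℝ X]
  [NormedAddCommGroup Y] [NormedSpace ℝ Y] {F : X → Y} {L : ℝ}

def HasLipschitzSliceFDerivs (F : X → Y) (L : ℝ) : Prop :=
  ∀ y' : StrongDual ℝ Y, Differentiable ℝ (fun z => y' (F z)) ∧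
    ∀ a b : X, ‖fderiv ℝ (fun z => y' (F z)) a - fderiv ℝ (fun z => y' (F z)) b‖ ≤
      L * ‖y'‖ * ‖a - b‖

theorem hasLipschitzSliceFDerivs_of_unit_slices
    (hslice : ∀ y' : StrongDual ℝ Y, ‖y'‖ ≤ 1 →
      Differentiable ℝ (fun z => y' (F z)) ∧
        ∀ a b : X, ‖fderiv ℝ (fun z => y' (F z)) a - fderiv ℝ (fun z => y' (F z)) b‖ ≤
          L * ‖a - b‖) :
    HasLipschitzSliceFDerivs F L := fun y' => by
  obtain ⟨u, hu, hy⟩ := exists_norm_le_one_eq_norm_smul y'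
  obtain ⟨hdiff, hlip⟩ := hslice u hu
  have hslice_eq : (fun z => y' (F z)) = ‖y'‖ • fun z => u (F z) := by
    funext z; nth_rw 1 [hy]; rfl
  refine ⟨hslice_eq ▸ hdiff.const_smul _, fun a b => ?_⟩
  rw [hslice_eq, fderiv_const_smul (hdiff a), fderiv_const_smul (hdiff b), ← smul_sub,
    norm_smul, norm_norm, mul_comm L, mul_assoc]
  exact mul_le_mul_of_nonneg_left (hlip a b) (norm_nonneg _)

theorem HasLipschitzSliceFDerivs.norm_add_sub_sub_fderiv_le (hs : HasLipschitzSliceFDerivs F L)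
    (hL : 0 ≤ L) (y' : StrongDual ℝ Y) (x h : X) :
    ‖y' (F (x + h)) - y' (F x) - fderiv ℝ (fun z => y' (F z)) x h‖ ≤ L * ‖y'‖ * ‖h‖ ^ 2 :=
  norm_image_add_sub_sub_fderiv_le (hs y').1 (by positivity) (hs y').2 x h

theorem HasLipschitzSliceFDerivs.exists_clm_eq_fderiv (hs : HasLipschitzSliceFDerivs F L)
    (hF : Continuous F) (hL : 0 ≤ L) (x : X) :
    ∃ Φ : StrongDual ℝ Y →L[ℝ] StrongDual ℝ X, ∀ y', Φ y' = fderiv ℝ (fun z => y' (F z)) x := by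
  obtain ⟨ε, hε, hosc⟩ : ∃ ε > 0, ∀ h ∈ closedBall (0 : X) ε, ‖F (x + h) - F x‖ ≤ 1 := by
    have hcont : Filter.Tendsto (fun h => F (x + h) - F x) (nhds 0) (nhds 0) :=
      ((hF.comp (continuous_const_add x)).sub continuous_const).tendsto' 0 0 (by simp)
    simpa using nhds_basis_closedBall.eventually_iff.mp
      (hcont.eventually (closedBall_mem_nhds 0 one_pos))
  let Φ : StrongDual ℝ Y →ₗ[ℝ] StrongDual ℝ X :=
    { toFun := fun y' => fderiv ℝ (fun z => y' (F z)) x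
      map_add' := fun y₁ y₂ => fderiv_fun_add ((hs y₁).1 x) ((hs y₂).1 x)
      map_smul' := fun c y' => fderiv_fun_const_smul ((hs y').1 x) c }
  refine ⟨Φ.mkContinuousOfExistsBound ⟨(1 + L * ε ^ 2) / ε, fun y' => ?_⟩, fun y' => rfl⟩
  have hslice_osc : ∀ h ∈ closedBall (0 : X) ε, ‖y' (F (x + h)) - y' (F x)‖ ≤ ‖y'‖ := fun h hh =>
    calc ‖y' (F (x + h)) - y' (F x)‖ ≤ ‖y'‖ * ‖F (x + h) - F x‖ := by
          rw [← map_sub]; exact y'.le_opNorm _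
      _ ≤ ‖y'‖ := mul_le_of_le_one_right (norm_nonneg _) (hosc h hh)
  calc ‖Φ y'‖ ≤ (‖y'‖ + L * ‖y'‖ * ε ^ 2) / ε :=
        StrongDual.norm_le_of_norm_image_sub_le (f := fun z => y' (F z)) hε
          (by positivity) (hs.norm_add_sub_sub_fderiv_le hL y' x) hslice_osc
    _ = (1 + L * ε ^ 2) / ε * ‖y'‖ := by ring

theorem HasLipschitzSliceFDerivs.hasFDerivAt (hs : HasLipschitzSliceFDerivs F L) (hL : 0 ≤ L)
    {A : X →L[ℝ] Y} {x : X}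
    (hA : ∀ (y' : StrongDual ℝ Y) h, y' (A h) = fderiv ℝ (fun z => y' (F z)) x h) :
    HasFDerivAt F A x :=
  hasFDerivAt_of_norm_sub_le_sq (K := L) fun h =>
    NormedSpace.norm_le_dual_bound ℝ _ (by positivity) fun y' => by
      rw [map_sub, map_sub, hA, mul_right_comm]
      exact hs.norm_add_sub_sub_fderiv_le hL y' x h

end Slices

theorem differentiable_of_slices_differentiable_general
    {X : Type*} [NormedAddCommGroup X] [NormedSpace ℝ X]
    {Y : Type*} [NormedAddCommGroup Y] [NormedSpace ℝ Y]
    (hrefl : Function.Surjective (NormedSpace.inclusionInDoubleDual ℝ Y))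
    (F : X → Y) (hF : Continuous F) (L : ℝ) (hL : 0 < L)
    (hslice : ∀ y' : Y →L[ℝ] ℝ, ‖y'‖ ≤ 1 →
      Differentiable ℝ (fun z => y' (F z)) ∧
        ∀ a b : X, ‖fderiv ℝ (fun z => y' (F z)) a - fderiv ℝ (fun z => y' (F z)) b‖ ≤
          L * ‖a - b‖) :
    Differentiable ℝ F ∧ ∀ x y : X, ‖fderiv ℝ F x - fderiv ℝ F y‖ ≤ L * ‖x - y‖ := by
  have hs := hasLipschitzSliceFDerivs_of_unit_slices hslice
  choose Φ hΦ using hs.exists_clm_eq_fderiv hF hL.le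
  choose A hA using fun x => exists_dual_apply_eq_of_surjective_inclusionInDoubleDual hrefl (Φ x)
  have hder : ∀ x, HasFDerivAt F (A x) x := fun x =>
    hs.hasFDerivAt hL.le fun y' h => by rw [hA, hΦ]
  refine ⟨fun x => (hder x).differentiableAt, fun a b => ?_⟩
  rw [(hder a).fderiv, (hder b).fderiv]
  calc ‖A a - A b‖ ≤ ‖Φ a - Φ b‖ := opNorm_le_of_dual_apply_eq fun y' h => by simp [hA]
    _ ≤ L * ‖a - b‖ := (Φ a - Φ b).opNorm_le_bound (by positivity) fun y' => by
        rw [sub_apply, hΦ, hΦ, mul_right_comm]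
        exact (hs y').2 a b

/-- If `X`, `Y` are real Banach spaces with `Y` reflexive, `F : X → Y` is continuous, and every
slice `y* ∘ F` (for `‖y*‖ ≤ 1`) is Fréchet differentiable with `L`-Lipschitz derivative, then
`F` is Fréchet differentiable with `L`-Lipschitz derivative. -/
theorem differentiable_of_slices_differentiable
    {X : Type*} [NormedAddCommGroup X] [NormedSpace ℝ X] [CompleteSpace X]
    {Y : Type*} [NormedAddCommGroup Y] [NormedSpace ℝ Y] [CompleteSpace Y]
    (hrefl : Function.Surjective (NormedSpace.inclusionInDoubleDual ℝ Y))
    (F : X → Y) (hF : Continuous F) (L : ℝ) (hL : 0 < L)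
    (hslice : ∀ y' : Y →L[ℝ] ℝ, ‖y'‖ ≤ 1 →
      Differentiable ℝ (fun z => y' (F z)) ∧
        ∀ a b : X, ‖fderiv ℝ (fun z => y' (F z)) a - fderiv ℝ (fun z => y' (F z)) b‖ ≤
          L * ‖a - b‖) :
    Differentiable ℝ F ∧ ∀ x y : X, ‖fderiv ℝ F x - fderiv ℝ F y‖ ≤ L * ‖x - y‖ :=
  differentiable_of_slices_differentiable_general hrefl F hF L hL hslice
end

section
/- Let X be a real Hilbert space, L > 0, and let φ : X → ℝ be a continuous function such that both x ↦ (L/2)‖x‖² − φ(x) and x ↦ (L/2)‖x‖² + φ(x) are convex on X. Then φ is Fréchet differentiable on X and its gradient ∇φ : X → X is L-Lipschitz continuous. -/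
/-!
Affine minorants of the continuous convex functions `(L/2)‖·‖² ∓ φ` at `x` (Hahn–Banach applied to
their strict epigraphs) give a quadratic upper and a quadratic lower bound for `φ` around `x`. The
linear parts of the two bounds must coincide, so
`|φ y - φ x - ⟪∇φ x, y - x⟫| ≤ (L/2)‖y - x‖²` for all `x, y`.
In terms of `g = (L/2)‖·‖² + φ` this says that `g` lies above its tangent planes and below them
plus `L‖y - x‖²`. Such a function has a co-coercive gradient,
`‖∇g x - ∇g y‖² ≤ 2L ⟪∇g x - ∇g y, x - y⟫`, and since `∇g = L • id + ∇φ`, expanding both sides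
leaves exactly `‖∇φ x - ∇φ y‖² ≤ L² ‖x - y‖²`.
-/

open Set Filter RealInnerProductSpace

theorem ConvexOn.exists_strongDual_le {E : Type*} [TopologicalSpace E] [AddCommGroup E]
    [Module ℝ E] [IsTopologicalAddGroup E] [ContinuousSMul ℝ E] {f : E → ℝ}
    (hf : ConvexOn ℝ univ f) (hf_cont : Continuous f) (x : E) :
    ∃ g : StrongDual ℝ E, ∀ y, f x + g (y - x) ≤ f y := by
  have hopen : IsOpen {p : E × ℝ | p.1 ∈ univ ∧ f p.1 < p.2} := by
    simp only [mem_univ, true_and]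
    exact isOpen_lt (by fun_prop) continuous_snd
  have hx : (x, f x) ∉ {p : E × ℝ | p.1 ∈ univ ∧ f p.1 < p.2} := fun h => lt_irrefl _ h.2
  obtain ⟨ℓ, hℓ⟩ := geometric_hahn_banach_open_point hf.convex_strict_epigraph hopen hx
  set c := ℓ (0, 1)
  have hℓ_apply : ∀ y t, ℓ (y, t) = ℓ (y, 0) + t * c := fun y t => by
    have hyt : ((y, t) : E × ℝ) = (y, 0) + t • (0, 1) := by simp
    rw [hyt, map_add, map_smul, smul_eq_mul]
  have hsep : ∀ y t, f y < t → ℓ (y, 0) + t * c < ℓ (x, 0) + f x * c := fun y t ht => by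
    rw [← hℓ_apply, ← hℓ_apply]
    exact hℓ (y, t) ⟨trivial, ht⟩
  have hc : c < 0 := by linarith [hsep x (f x + 1) (lt_add_one _)]
  have hsupport : ∀ y, ℓ (y, 0) + f y * c ≤ ℓ (x, 0) + f x * c := fun y =>
    le_of_tendsto
      (((by fun_prop : Continuous fun t => ℓ (y, 0) + t * c).tendsto (f y)).mono_left
        nhdsWithin_le_nhds)
      (eventually_nhdsWithin_of_forall (s := Ioi (f y)) fun t ht => (hsep y t ht).le)
  -- Since `c < 0` the separating hyperplane is not vertical; rescaling `ℓ` to `c = -1` gives `g`.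
  refine ⟨(-c)⁻¹ • ℓ.comp (.inl ℝ E ℝ), fun y => ?_⟩
  have hsub : ℓ (y - x, 0) = ℓ (y, 0) - ℓ (x, 0) := by
    rw [← map_sub, Prod.mk_sub_mk, sub_zero]
  have : (-c)⁻¹ * (ℓ (y, 0) - ℓ (x, 0)) ≤ f y - f x := by
    rw [inv_mul_le_iff₀ (neg_pos.2 hc)]
    linarith [hsupport y]
  rw [smul_apply, ContinuousLinearMap.comp_apply, ContinuousLinearMap.inl_apply, hsub, smul_eq_mul]
  linarith

section InnerProductSpace

variable {X : Type*} [NormedAddCommGroup X] [InnerProductSpace ℝ X]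

theorem norm_sq_eq_add_inner_add_norm_sub_sq (x y : X) :
    ‖y‖ ^ 2 = ‖x‖ ^ 2 + 2 * ⟪x, y - x⟫ + ‖y - x‖ ^ 2 := by
  rw [← norm_add_sq_real, add_sub_cancel]

theorem ConvexOn.exists_inner_le [CompleteSpace X] {f : X → ℝ} (hf : ConvexOn ℝ univ f)
    (hf_cont : Continuous f) (x : X) : ∃ p : X, ∀ y, f x + ⟪p, y - x⟫ ≤ f y := by
  obtain ⟨g, hg⟩ := hf.exists_strongDual_le hf_cont x
  refine ⟨(InnerProductSpace.toDual ℝ X).symm g, fun y => ?_⟩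
  rw [InnerProductSpace.toDual_symm_apply]
  exact hg y

theorem exists_le_add_inner_add_sq_of_convexOn_sub [CompleteSpace X] {L : ℝ} {ψ : X → ℝ}
    (hψ : Continuous ψ) (hconv : ConvexOn ℝ univ fun x => L / 2 * ‖x‖ ^ 2 - ψ x) (x : X) :
    ∃ a : X, ∀ y, ψ y ≤ ψ x + ⟪a, y - x⟫ + L / 2 * ‖y - x‖ ^ 2 := by
  obtain ⟨p, hp⟩ := hconv.exists_inner_le (by fun_prop) x
  refine ⟨L • x - p, fun y => ?_⟩
  rw [inner_sub_left, real_inner_smul_left]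
  linear_combination hp y + L / 2 * norm_sq_eq_add_inner_add_norm_sub_sq x y

theorem eq_of_forall_inner_sub_le_mul_norm_sq {a b : X} {C : ℝ}
    (h : ∀ s, ⟪b - a, s⟫ ≤ C * ‖s‖ ^ 2) : a = b := by
  set t := (|C| + 1)⁻¹
  have ht : 0 < t := by positivity
  have hCt : C * t < 1 := by
    rw [← div_eq_mul_inv, div_lt_one (by positivity)]
    linarith [le_abs_self C]
  have hts := h (t • (b - a))
  rw [real_inner_smul_right, real_inner_self_eq_norm_sq, norm_smul, Real.norm_of_nonneg ht.le,
    mul_pow] at hts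
  have hk : 0 < t * (1 - C * t) := mul_pos ht (sub_pos.2 hCt)
  have hsq : ‖b - a‖ ^ 2 ≤ 0 :=
    le_of_mul_le_mul_left (by linear_combination hts : t * (1 - C * t) * ‖b - a‖ ^ 2 ≤ _ * 0) hk
  rw [eq_comm, ← sub_eq_zero, ← norm_eq_zero]
  exact (pow_eq_zero_iff two_ne_zero).1 (le_antisymm hsq (sq_nonneg _))

theorem exists_abs_sub_inner_le_of_convexOn [CompleteSpace X] {L : ℝ} {φ : X → ℝ}
    (hφ : Continuous φ) (h₁ : ConvexOn ℝ univ fun x => L / 2 * ‖x‖ ^ 2 - φ x)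
    (h₂ : ConvexOn ℝ univ fun x => L / 2 * ‖x‖ ^ 2 + φ x) (x : X) :
    ∃ a : X, ∀ y, |φ y - φ x - ⟪a, y - x⟫| ≤ L / 2 * ‖y - x‖ ^ 2 := by
  obtain ⟨a, ha⟩ := exists_le_add_inner_add_sq_of_convexOn_sub hφ h₁ x
  obtain ⟨b, hb⟩ := exists_le_add_inner_add_sq_of_convexOn_sub hφ.neg
    (by simpa only [Pi.neg_apply, sub_neg_eq_add] using h₂) x
  simp only [Pi.neg_apply] at hb
  have hab : a = -b := eq_of_forall_inner_sub_le_mul_norm_sq (C := L) fun s => by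
    have hu := ha (x + s)
    have hl := hb (x + s)
    rw [add_sub_cancel_left] at hu hl
    rw [inner_sub_left, inner_neg_left]
    linarith
  subst hab
  refine ⟨-b, fun y => abs_le.2 ⟨?_, ?_⟩⟩
  · linarith [hb y, inner_neg_left (𝕜 := ℝ) b (y - x)]
  · linarith [ha y]

theorem hasGradientAt_of_abs_sub_inner_le [CompleteSpace X] {f : X → ℝ} {a x : X} {C : ℝ}
    (h : ∀ y, |f y - f x - ⟪a, y - x⟫| ≤ C * ‖y - x‖ ^ 2) : HasGradientAt f a x := by
  rw [hasGradientAt_iff_isLittleO_nhds_zero]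
  refine (Asymptotics.IsBigO.of_bound C (Eventually.of_forall fun s => ?_)).trans_isLittleO
    (Asymptotics.isLittleO_norm_pow_id one_lt_two)
  simpa [Real.norm_eq_abs] using h (x + s)

section Cocoercive

variable {g : X → ℝ} {G : X → X} {M : ℝ}

theorem add_inner_add_norm_sub_sq_div_le_s10 (hM : 0 < M)
    (hlower : ∀ z w, g z + ⟪G z, w - z⟫ ≤ g w)
    (hupper : ∀ z w, g w ≤ g z + ⟪G z, w - z⟫ + M / 2 * ‖w - z‖ ^ 2) (z w : X) :
    g z + ⟪G z, w - z⟫ + ‖G w - G z‖ ^ 2 / (2 * M) ≤ g w := by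
  -- `w + s` minimises `v ↦ ⟪G w - G z, v - w⟫ + M / 2 * ‖v - w‖ ^ 2`.
  set s := -M⁻¹ • (G w - G z)
  have h₁ := hlower z (w + s)
  have h₂ := hupper w (w + s)
  rw [add_sub_cancel_left] at h₂
  have hs₁ : ⟪G z, w + s - z⟫ = ⟪G z, w - z⟫ + ⟪G z, s⟫ := by
    rw [← inner_add_right, add_sub_right_comm]
  have hs₂ : ⟪G w, s⟫ - ⟪G z, s⟫ = -M⁻¹ * ‖G w - G z‖ ^ 2 := by
    rw [← inner_sub_left, real_inner_smul_right, real_inner_self_eq_norm_sq]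
  have hs₃ : ‖s‖ ^ 2 = M⁻¹ ^ 2 * ‖G w - G z‖ ^ 2 := by
    rw [norm_smul, norm_neg, Real.norm_of_nonneg (inv_nonneg.2 hM.le), mul_pow]
  have hM' : M / 2 * M⁻¹ ^ 2 = M⁻¹ / 2 := by field_simp
  rw [hs₁] at h₁
  rw [hs₃, ← mul_assoc, hM'] at h₂
  rw [div_eq_mul_inv, mul_inv, mul_comm (2 : ℝ)⁻¹]
  linarith

theorem norm_sub_sq_le_mul_inner_sub (hM : 0 < M)
    (hlower : ∀ z w, g z + ⟪G z, w - z⟫ ≤ g w)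
    (hupper : ∀ z w, g w ≤ g z + ⟪G z, w - z⟫ + M / 2 * ‖w - z‖ ^ 2) (z w : X) :
    ‖G z - G w‖ ^ 2 ≤ M * ⟪G z - G w, z - w⟫ := by
  have h₁ := add_inner_add_norm_sub_sq_div_le_s10 hM hlower hupper z w
  have h₂ := add_inner_add_norm_sub_sq_div_le_s10 hM hlower hupper w z
  rw [norm_sub_rev] at h₁
  have hinner : ⟪G z - G w, z - w⟫ = -⟪G z, w - z⟫ - ⟪G w, z - w⟫ := by
    rw [inner_sub_left, ← inner_neg_right, neg_sub]
  have hhalf : ‖G z - G w‖ ^ 2 / M = ‖G z - G w‖ ^ 2 / (2 * M) + ‖G z - G w‖ ^ 2 / (2 * M) := by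
    field_simp
    ring
  rw [hinner, ← div_le_iff₀' hM]
  linarith

end Cocoercive

theorem norm_sub_le_of_abs_sub_inner_le {φ : X → ℝ} {A : X → X} {L : ℝ} (hL : 0 < L)
    (hA : ∀ z w, |φ w - φ z - ⟪A z, w - z⟫| ≤ L / 2 * ‖w - z‖ ^ 2) (x y : X) :
    ‖A x - A y‖ ≤ L * ‖x - y‖ := by
  have hg : ∀ z w, (L / 2 * ‖w‖ ^ 2 + φ w) - (L / 2 * ‖z‖ ^ 2 + φ z + ⟪L • z + A z, w - z⟫) =
      φ w - φ z - ⟪A z, w - z⟫ + L / 2 * ‖w - z‖ ^ 2 := fun z w => by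
    rw [inner_add_left, real_inner_smul_left, norm_sq_eq_add_inner_add_norm_sub_sq z w]
    ring
  have hcoco := norm_sub_sq_le_mul_inner_sub (g := fun z => L / 2 * ‖z‖ ^ 2 + φ z)
    (G := fun z => L • z + A z) (M := 2 * L) (by positivity)
    (fun z w => by linarith [hg z w, (abs_le.1 (hA z w)).1])
    (fun z w => by linarith [hg z w, (abs_le.1 (hA z w)).2]) x y
  have hG : L • x + A x - (L • y + A y) = L • (x - y) + (A x - A y) := by
    rw [smul_sub]; abel
  rw [hG, norm_add_sq_real, inner_add_left, norm_smul, real_inner_smul_left,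
    real_inner_smul_left, real_inner_self_eq_norm_sq, real_inner_comm, Real.norm_of_nonneg hL.le]
    at hcoco
  rw [← pow_le_pow_iff_left₀ (norm_nonneg _) (by positivity) two_ne_zero]
  linarith

end InnerProductSpace

/-- If `φ : X → ℝ` (with `X` a real Hilbert space) is continuous and both `(L/2)‖·‖² - φ` and
`(L/2)‖·‖² + φ` are convex, then `φ` is Fréchet differentiable and its gradient is
`L`-Lipschitz continuous. -/
theorem differentiable_lipschitz_gradient_of_two_sided_convexity
    {X : Type*} [NormedAddCommGroup X] [InnerProductSpace ℝ X] [CompleteSpace X]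
    (L : ℝ) (hL : 0 < L) (φ : X → ℝ) (hφ : Continuous φ)
    (hconv₁ : ConvexOn ℝ Set.univ (fun x => L / 2 * ‖x‖ ^ 2 - φ x))
    (hconv₂ : ConvexOn ℝ Set.univ (fun x => L / 2 * ‖x‖ ^ 2 + φ x)) :
    Differentiable ℝ φ ∧ ∀ x y : X, ‖gradient φ x - gradient φ y‖ ≤ L * ‖x - y‖ := by
  choose A hA using exists_abs_sub_inner_le_of_convexOn hφ hconv₁ hconv₂
  have hgrad : ∀ x, HasGradientAt φ (A x) x := fun x => hasGradientAt_of_abs_sub_inner_le (hA x)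
  refine ⟨fun x => (hgrad x).differentiableAt, fun x y => ?_⟩
  rw [(hgrad x).gradient, (hgrad y).gradient]
  exact norm_sub_le_of_abs_sub_inner_le hL hA x y
end
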